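/- arXiv:2512.00505 — 8 statements merged into one kernel-verified Lean document; each statement's English description precedes it below -/
import Mathlib

section
/- For every formal power series f over ℤ_p with constant term 1, there exists a unique sequence (a_m)_{m≥1} of p-adic integers such that f(x) = ∏_{m=1}^∞ (1 - x^m)^{a_m} as formal power series, where (1-x^m)^a denotes the binomial series ∑_n binom(a,n)(-x^m)^n. -/
open PowerSeries

/-- `binom(a, n) = a(a-1)⋯(a-n+1)/n!` computed in `ℚ_[p]`. -/
noncomputable def qbinom (p : ℕ) [Fact p.Prime] (a : ℚ_[p]) (n : ℕ) : ℚ_[p] :=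
  (∏ i ∈ Finset.range n, (a - (i : ℚ_[p]))) / (n.factorial : ℚ_[p])

/-- The binomial series `(1 - x^m)^a = ∑_k binom(a,k) (-x^m)^k` over `ℚ_[p]`. -/
noncomputable def oneSubXmPow (p : ℕ) [Fact p.Prime] (m : ℕ) (a : ℚ_[p]) :
    PowerSeries ℚ_[p] :=
  PowerSeries.mk fun n => if m ∣ n then (-1) ^ (n / m) * qbinom p a (n / m) else 0

/-!
Over any binomial ring the series `(1 - X^m)^a` is `≡ 1 - a X^m` modulo `X^(m+1)`, and `ℤ_[p]`
is a binomial ring, so the factors already live in `ℤ_[p]⟦X⟧`. Hence the coefficient of `X^N`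
in the partial product over `1 ≤ m ≤ N` is that of the product over `m < N` minus `a_N`;
equating it with the `N`-th coefficient of `f` determines `a_N` from `a_1, …, a_{N-1}`, which
gives existence and uniqueness at once.
-/

open Finset

section InfiniteProduct

variable {R : Type*} [CommRing R]

theorem constantCoeff_eq_one_of_X_pow_succ_dvd_sub {G : R⟦X⟧} {a : R} {m : ℕ} (hm : 0 < m)
    (hG : X ^ (m + 1) ∣ G - (1 - C a * X ^ m)) : constantCoeff G = 1 := by
  have h := X_pow_dvd_iff.mp hG 0 (by omega)
  simp only [map_sub, coeff_one, coeff_C_mul_X_pow, if_pos, if_neg hm.ne,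
    coeff_zero_eq_constantCoeff] at h
  linear_combination h

theorem coeff_mul_of_X_pow_succ_dvd_sub {P G : R⟦X⟧} {a : R} {N : ℕ}
    (hP : constantCoeff P = 1) (hG : X ^ (N + 1) ∣ G - (1 - C a * X ^ N)) :
    coeff N (P * G) = coeff N P - a := by
  obtain ⟨Q, hQ⟩ := hG
  have hPG : P * G = P - C a * (P * X ^ N) + X ^ (N + 1) * (P * Q) := by
    linear_combination P * hQ
  rw [hPG, map_add, map_sub, coeff_C_mul, coeff_mul_X_pow', coeff_X_pow_mul', if_pos le_rfl,
    if_neg (by omega), Nat.sub_self, coeff_zero_eq_constantCoeff, hP]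
  ring

variable {G : ℕ → R → R⟦X⟧}

theorem constantCoeff_prod_Icc
    (hG : ∀ m, 0 < m → ∀ a, X ^ (m + 1) ∣ G m a - (1 - C a * X ^ m))
    (a : ℕ → R) (N : ℕ) : constantCoeff (∏ m ∈ Icc 1 N, G m (a m)) = 1 := by
  rw [map_prod]
  exact prod_eq_one fun m hm =>
    constantCoeff_eq_one_of_X_pow_succ_dvd_sub (mem_Icc.mp hm).1 (hG m (mem_Icc.mp hm).1 (a m))

theorem coeff_prod_Icc_succ (hG : ∀ m, 0 < m → ∀ a, X ^ (m + 1) ∣ G m a - (1 - C a * X ^ m))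
    (a : ℕ → R) (N : ℕ) :
    coeff (N + 1) (∏ m ∈ Icc 1 (N + 1), G m (a m)) =
      coeff (N + 1) (∏ m ∈ Icc 1 N, G m (a m)) - a (N + 1) := by
  rw [prod_Icc_succ_top (by omega)]
  exact coeff_mul_of_X_pow_succ_dvd_sub (constantCoeff_prod_Icc hG a N) (hG _ N.succ_pos _)

theorem coeff_eq_coeff_prod_Icc_iff
    (hG : ∀ m, 0 < m → ∀ a, X ^ (m + 1) ∣ G m a - (1 - C a * X ^ m))
    {f : R⟦X⟧} (hf : constantCoeff f = 1) (a : ℕ → R) :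
    (∀ N, coeff N f = coeff N (∏ m ∈ Icc 1 N, G m (a m))) ↔
      ∀ N, a (N + 1) = coeff (N + 1) (∏ m ∈ Icc 1 N, G m (a m)) - coeff (N + 1) f := by
  constructor
  · intro h N
    linear_combination coeff_prod_Icc_succ hG a N + h (N + 1)
  · intro h N
    cases N with
    | zero => simp [hf]
    | succ N => rw [coeff_prod_Icc_succ hG, h N]; ring

noncomputable def prodExponent (G : ℕ → R → R⟦X⟧) (f : R⟦X⟧) : ℕ → R
  | 0 => 0
  | N + 1 => coeff (N + 1) (∏ m ∈ (Icc 1 N).attach, G m (prodExponent G f m)) - coeff (N + 1) f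
decreasing_by exact Nat.lt_succ_of_le (mem_Icc.mp m.2).2

theorem prodExponent_zero (f : R⟦X⟧) : prodExponent G f 0 = 0 := by
  rw [prodExponent]

theorem prodExponent_succ (f : R⟦X⟧) (N : ℕ) :
    prodExponent G f (N + 1) =
      coeff (N + 1) (∏ m ∈ Icc 1 N, G m (prodExponent G f m)) - coeff (N + 1) f := by
  rw [prodExponent, prod_attach (Icc 1 N) fun m => G m (prodExponent G f m)]

theorem eq_prodExponent {f : R⟦X⟧} {a : ℕ → R} (h0 : a 0 = 0)
    (h : ∀ N, a (N + 1) = coeff (N + 1) (∏ m ∈ Icc 1 N, G m (a m)) - coeff (N + 1) f) :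
    a = prodExponent G f := by
  funext N
  induction N using Nat.strong_induction_on with
  | _ N ih =>
    cases N with
    | zero => rw [h0, prodExponent_zero]
    | succ N =>
      rw [h, prodExponent_succ]
      congr 2
      exact prod_congr rfl fun m hm => by rw [ih m (Nat.lt_succ_of_le (mem_Icc.mp hm).2)]

theorem existsUnique_coeff_eq_coeff_prod_Icc
    (hG : ∀ m, 0 < m → ∀ a, X ^ (m + 1) ∣ G m a - (1 - C a * X ^ m))
    {f : R⟦X⟧} (hf : constantCoeff f = 1) :
    ∃! a : ℕ → R, a 0 = 0 ∧ ∀ N, coeff N f = coeff N (∏ m ∈ Icc 1 N, G m (a m)) := by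
  simp only [coeff_eq_coeff_prod_Icc_iff hG hf]
  exact ⟨prodExponent G f, ⟨prodExponent_zero f, prodExponent_succ f⟩,
    fun a ⟨h0, h⟩ => eq_prodExponent h0 h⟩

end InfiniteProduct

section BinomialSeries

variable {R : Type*} [CommRing R] [BinomialRing R]

noncomputable def binomSeries (m : ℕ) (a : R) : R⟦X⟧ :=
  mk fun n => if m ∣ n then (-1) ^ (n / m) * Ring.choose a (n / m) else 0

theorem X_pow_succ_dvd_binomSeries_sub {m : ℕ} (hm : 0 < m) (a : R) :
    X ^ (m + 1) ∣ binomSeries m a - (1 - C a * X ^ m) := by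
  refine X_pow_dvd_iff.mpr fun n hn => ?_
  rw [map_sub, map_sub, coeff_one, coeff_C_mul_X_pow, binomSeries, coeff_mk]
  obtain rfl | hn0 := Nat.eq_zero_or_pos n
  · simp [hm.ne]
  obtain rfl | hnm := eq_or_ne n m
  · simp [Nat.div_self hm, hm.ne']
  have hndvd : ¬ m ∣ n := Nat.not_dvd_of_pos_of_lt hn0 (by omega)
  simp [hndvd, hn0.ne', hnm]

theorem map_binomSeries {S : Type*} [CommRing S] [BinomialRing S] (f : R →+* S) (m : ℕ)
    (a : R) : map f (binomSeries m a) = binomSeries m (f a) := by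
  ext n
  simp [binomSeries, coeff_map, apply_ite f, Ring.map_choose]

end BinomialSeries

section Padic

variable {p : ℕ} [Fact p.Prime]

theorem qbinom_eq_choose (a : ℚ_[p]) (n : ℕ) : qbinom p a n = Ring.choose a n := by
  rw [qbinom, Ring.choose_eq_smul, ← Polynomial.aeval_eq_smeval, Polynomial.aeval_def,
    ← Polynomial.eval_map, descPochhammer_map, descPochhammer_eval_eq_prod_range, smul_eq_mul,
    inv_mul_eq_div]

theorem oneSubXmPow_eq_binomSeries (m : ℕ) (a : ℚ_[p]) :
    oneSubXmPow p m a = binomSeries m a := by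
  ext n
  simp only [oneSubXmPow, binomSeries, coeff_mk, qbinom_eq_choose]

end Padic

/-- Convergence of the infinite product is expressed coefficientwise: the `N`-th coefficient of
`f` is compared with that of the partial product over `1 ≤ m ≤ N`, the remaining factors being
`≡ 1 mod x^{N+1}`. -/
theorem stmt_0 (p : ℕ) [Fact p.Prime] (f : PowerSeries ℤ_[p])
    (hf : constantCoeff f = 1) :
    ∃! a : ℕ → ℤ_[p], a 0 = 0 ∧
      ∀ N : ℕ, ((coeff N f : ℤ_[p]) : ℚ_[p]) =
        coeff N (∏ m ∈ Finset.Icc 1 N, oneSubXmPow p m ((a m : ℚ_[p]))) := by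
  have hprod (a : ℕ → ℤ_[p]) (N : ℕ) : ∏ m ∈ Icc 1 N, oneSubXmPow p m (a m) =
      map PadicInt.Coe.ringHom (∏ m ∈ Icc 1 N, binomSeries m (a m)) := by
    simp only [map_prod, map_binomSeries, oneSubXmPow_eq_binomSeries]
    rfl
  have hcoe_inj (x y : ℤ_[p]) : (x : ℚ_[p]) = PadicInt.Coe.ringHom y ↔ x = y :=
    Subtype.val_injective.eq_iff
  simp only [hprod, coeff_map, hcoe_inj]
  exact existsUnique_coeff_eq_coeff_prod_Icc (fun _ hm => X_pow_succ_dvd_binomSeries_sub hm) hf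
end

section
/- Let f ∈ ℤ_p[[x]] with f(0)=1, and write x·f'(x)/f(x) = ∑_{n=1}^∞ c_n x^n. Then all c_n lie in ℤ_p, and for every k, r ∈ ℕ one has c_{k·p^{r+1}} ≡ c_{k·p^r} (mod p^{r+1} ℤ_p). -/
/-!
Write `ℓ(g) = x g'/g`, which turns products into sums, and put `g = f(x)^p / f(x^p)`.
Then `ℓ(g) = p (ℓ(f)(x) - ℓ(f)(x^p))`, whose coefficient at `n = k p^(r+1)` is
`p (c_n - c_(n/p))`. Since `f(x)^p ≡ f(x^p) mod p`, we have `g = 1 - v` with `p` dividing every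
coefficient of `v`, and `ℓ(g) = -∑ₘ x v' vᵐ`. As `(m+1) x v' vᵐ = x (v^(m+1))'`, the
`n`-th coefficient of `x v' vᵐ` is `n [xⁿ]v^(m+1) / (m+1)`, which is divisible by `p^(v_p(n)+1)`
because `p^(m+1)` divides `[xⁿ]v^(m+1)` while `v_p(m+1) ≤ m`.
-/

open PowerSeries

namespace PowerSeries

variable {R : Type*} [CommRing R]

noncomputable def xLogDeriv (u : R⟦X⟧ˣ) : R⟦X⟧ := X * d⁄dX R u * (↑u⁻¹ : R⟦X⟧)

theorem xLogDeriv_mul_coe (u : R⟦X⟧ˣ) : xLogDeriv u * (u : R⟦X⟧) = X * d⁄dX R u := by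
  rw [xLogDeriv, mul_assoc, Units.inv_mul, mul_one]

theorem xLogDeriv_mul (u v : R⟦X⟧ˣ) : xLogDeriv (u * v) = xLogDeriv u + xLogDeriv v := by
  simp only [xLogDeriv, Units.val_mul, mul_inv_rev, Derivation.leibniz, smul_eq_mul]
  linear_combination
    (X * d⁄dX R u * ↑u⁻¹) * v.mul_inv + (X * d⁄dX R v * ↑v⁻¹) * u.mul_inv

@[simp]
theorem xLogDeriv_one : xLogDeriv (1 : R⟦X⟧ˣ) = 0 := by
  simp [xLogDeriv]

theorem xLogDeriv_inv (u : R⟦X⟧ˣ) : xLogDeriv u⁻¹ = -xLogDeriv u := by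
  rw [eq_neg_iff_add_eq_zero, add_comm, ← xLogDeriv_mul, mul_inv_cancel, xLogDeriv_one]

theorem xLogDeriv_pow (u : R⟦X⟧ˣ) (m : ℕ) : xLogDeriv (u ^ m) = m • xLogDeriv u := by
  induction m with
  | zero => simp
  | succ m ih => rw [pow_succ, xLogDeriv_mul, ih, succ_nsmul]

theorem coeff_X_mul_derivative (f : R⟦X⟧) (n : ℕ) :
    coeff n (X * d⁄dX R f) = n * coeff n f := by
  cases n with
  | zero => simp
  | succ n => rw [coeff_succ_X_mul, coeff_derivative, mul_comm]; push_cast; ring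

theorem pow_dvd_coeff_pow {r : R} {u : R⟦X⟧} (hu : ∀ i, r ∣ coeff i u) (k n : ℕ) :
    r ^ k ∣ coeff n (u ^ k) := by
  induction k generalizing n with
  | zero => simp
  | succ k ih =>
    rw [pow_succ, pow_succ, coeff_mul]
    exact Finset.dvd_sum fun x _ => mul_dvd_mul (ih x.1) (hu x.2)

theorem X_mul_derivative_expand (p : ℕ) (hp : p ≠ 0) (f : R⟦X⟧) :
    X * d⁄dX R (expand p hp f) = p • expand p hp (X * d⁄dX R f) := by
  ext n
  rw [coeff_X_mul_derivative, map_nsmul, coeff_expand, coeff_expand]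
  split_ifs with h
  · obtain ⟨m, rfl⟩ := h
    rw [Nat.mul_div_cancel_left _ (Nat.pos_of_ne_zero hp), coeff_X_mul_derivative, nsmul_eq_mul]
    push_cast; ring
  · simp

theorem xLogDeriv_map_expand (p : ℕ) (hp : p ≠ 0) (u : R⟦X⟧ˣ) :
    xLogDeriv (Units.map (expand (R := R) p hp : R⟦X⟧ →* R⟦X⟧) u) =
      p • expand p hp (xLogDeriv u) := by
  simp only [xLogDeriv, Units.coe_map, Units.coe_map_inv, MonoidHom.coe_coe,
    X_mul_derivative_expand, map_mul, smul_mul_assoc]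

theorem expand_eq_pow_zmod {p : ℕ} [Fact p.Prime] (F : (ZMod p)⟦X⟧) :
    expand p (NeZero.ne p) F = F ^ p := by
  have h := MvPowerSeries.map_frobenius_expand p (NeZero.ne p) (f := F)
  rw [ZMod.frobenius_zmod, MvPowerSeries.map_id] at h
  exact h

noncomputable def frobeniusQuotient (p : ℕ) (hp : p ≠ 0) (u : R⟦X⟧ˣ) : R⟦X⟧ˣ :=
  u ^ p * (Units.map (expand (R := R) p hp : R⟦X⟧ →* R⟦X⟧) u)⁻¹

theorem xLogDeriv_frobeniusQuotient (p : ℕ) (hp : p ≠ 0) (u : R⟦X⟧ˣ) :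
    xLogDeriv (frobeniusQuotient p hp u) = p • (xLogDeriv u - expand p hp (xLogDeriv u)) := by
  rw [frobeniusQuotient, xLogDeriv_mul, xLogDeriv_pow, xLogDeriv_inv, xLogDeriv_map_expand,
    smul_sub, sub_eq_add_neg]

theorem constantCoeff_frobeniusQuotient (p : ℕ) (hp : p ≠ 0) {u : R⟦X⟧ˣ}
    (hu : constantCoeff (u : R⟦X⟧) = 1) :
    constantCoeff (frobeniusQuotient p hp u : R⟦X⟧) = 1 := by
  have hinv {w : R⟦X⟧ˣ} (hw : constantCoeff (w : R⟦X⟧) = 1) :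
      constantCoeff (↑w⁻¹ : R⟦X⟧) = 1 := by
    have h := congrArg constantCoeff w.mul_inv
    rwa [map_mul, map_one, hw, one_mul] at h
  rw [frobeniusQuotient, Units.val_mul, map_mul, Units.val_pow_eq_pow_val, map_pow, hu, one_pow,
    one_mul, hinv]
  rwa [Units.coe_map, MonoidHom.coe_coe, constantCoeff_expand]

theorem map_frobeniusQuotient_zmod {p : ℕ} [Fact p.Prime] (φ : R →+* ZMod p) (u : R⟦X⟧ˣ) :
    map φ (frobeniusQuotient p (NeZero.ne p) u : R⟦X⟧) = 1 := by
  set v := Units.map (expand (R := R) p (NeZero.ne p) : R⟦X⟧ →* R⟦X⟧) u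
  have hfrob : map φ ((u : R⟦X⟧) ^ p) = map φ (v : R⟦X⟧) := by
    simp [v, map_expand, expand_eq_pow_zmod]
  rw [frobeniusQuotient, Units.val_mul, Units.val_pow_eq_pow_val, map_mul, hfrob, ← map_mul,
    Units.mul_inv, map_one]

end PowerSeries

namespace PadicInt

variable {p : ℕ} [Fact p.Prime]

theorem pow_dvd_of_pow_add_dvd_succ_mul {a m : ℕ} {x : ℤ_[p]}
    (h : (p : ℤ_[p]) ^ (a + m) ∣ ((m + 1 : ℕ) : ℤ_[p]) * x) : (p : ℤ_[p]) ^ a ∣ x := by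
  have hp : p.Prime := Fact.out
  set t := (m + 1).factorization p
  have hunit : IsUnit (((m + 1) / p ^ t : ℕ) : ℤ_[p]) :=
    isUnit_iff.mpr (norm_natCast_eq_one_iff.mpr (Nat.coprime_ordCompl hp m.succ_ne_zero))
  have ht : t ≤ m := by
    have : p ^ t ≤ m + 1 := Nat.ordProj_le p m.succ_ne_zero
    have : t < p ^ t := Nat.lt_pow_self hp.one_lt
    omega
  rw [← Nat.ordProj_mul_ordCompl_eq_self (m + 1) p, Nat.cast_mul, Nat.cast_pow, mul_assoc] at h
  have h' : (p : ℤ_[p]) ^ t * p ^ a ∣ p ^ t * (((m + 1) / p ^ t : ℕ) * x) := by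
    rw [← pow_add]
    exact (pow_dvd_pow _ (by omega)).trans h
  have hp0 : (p : ℤ_[p]) ^ t ≠ 0 := pow_ne_zero t (Nat.cast_ne_zero.mpr hp.ne_zero)
  exact hunit.dvd_mul_left.mp ((mul_dvd_mul_iff_left hp0).mp h')

theorem dvd_coeff_sub_of_map_toZMod_eq {f g : ℤ_[p]⟦X⟧} (h : map toZMod f = map toZMod g)
    (i : ℕ) : (p : ℤ_[p]) ∣ coeff i (f - g) := by
  rw [← Ideal.mem_span_singleton, ← maximalIdeal_eq_span_p, ← ker_toZMod, RingHom.mem_ker,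
    ← coeff_map, map_sub, h, sub_self, map_zero]

theorem pow_dvd_coeff_X_mul_derivative_mul_pow {v : ℤ_[p]⟦X⟧}
    (hv : ∀ i, (p : ℤ_[p]) ∣ coeff i v) {a n : ℕ} (hn : p ^ a ∣ n) (m : ℕ) :
    (p : ℤ_[p]) ^ (a + 1) ∣ coeff n (X * d⁄dX ℤ_[p] v * v ^ m) := by
  apply pow_dvd_of_pow_add_dvd_succ_mul (m := m)
  have hpow : ((m + 1 : ℕ) : ℤ_[p]) * coeff n (X * d⁄dX ℤ_[p] v * v ^ m) =
      n * coeff n (v ^ (m + 1)) := by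
    rw [← coeff_X_mul_derivative, derivative_pow, Nat.add_sub_cancel,
      ← map_natCast (C (R := ℤ_[p])), ← coeff_C_mul]
    ring_nf
  rw [hpow, show a + 1 + m = a + (m + 1) by ring, pow_add]
  exact mul_dvd_mul (by exact_mod_cast Nat.cast_dvd_cast hn) (pow_dvd_coeff_pow hv (m + 1) n)

theorem pow_dvd_coeff_xLogDeriv {g : ℤ_[p]⟦X⟧ˣ}
    (hg0 : constantCoeff (g : ℤ_[p]⟦X⟧) = 1) (hg : map toZMod (g : ℤ_[p]⟦X⟧) = 1)
    {a n : ℕ} (hn : p ^ a ∣ n) :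
    (p : ℤ_[p]) ^ (a + 1) ∣ coeff n (xLogDeriv g) := by
  set v : ℤ_[p]⟦X⟧ := 1 - g with hv
  have hXv : X ∣ v := by rw [X_dvd_iff, hv, map_sub, map_one, hg0, sub_self]
  -- Since `X ∣ v`, the series `g⁻¹ = ∑ vᵐ` agrees with `S` up to order `n`.
  set S := ∑ m ∈ Finset.range (n + 1), v ^ m
  have hgS : (↑g⁻¹ : ℤ_[p]⟦X⟧) = S + v ^ (n + 1) * ↑g⁻¹ := by
    have h := geom_sum_mul_neg v (n + 1)
    rw [hv, sub_sub_cancel] at h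
    linear_combination (-(↑g⁻¹ : ℤ_[p]⟦X⟧)) * h + S * g.mul_inv
  have hdg : d⁄dX ℤ_[p] (g : ℤ_[p]⟦X⟧) = -d⁄dX ℤ_[p] v := by
    rw [hv, map_sub, Derivation.map_one_eq_zero, zero_sub, neg_neg]
  have htail : coeff n (X * d⁄dX ℤ_[p] v * v ^ (n + 1) * (↑g⁻¹ : ℤ_[p]⟦X⟧)) = 0 :=
    X_pow_dvd_iff.mp (((pow_dvd_pow_of_dvd hXv _).mul_left _).mul_right _) n (lt_add_one n)
  have hcoeff : coeff n (xLogDeriv g) = -∑ m ∈ Finset.range (n + 1),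
      coeff n (X * d⁄dX ℤ_[p] v * v ^ m) := by
    have hsplit : xLogDeriv g =
        -(X * d⁄dX ℤ_[p] v * S) -
          X * d⁄dX ℤ_[p] v * v ^ (n + 1) * (↑g⁻¹ : ℤ_[p]⟦X⟧) := by
      rw [xLogDeriv, hdg]
      nth_rw 1 [hgS]
      ring
    rw [hsplit, map_sub, htail, sub_zero, map_neg, Finset.mul_sum, map_sum]
  rw [hcoeff, dvd_neg]
  exact Finset.dvd_sum fun m _ =>
    pow_dvd_coeff_X_mul_derivative_mul_pow (dvd_coeff_sub_of_map_toZMod_eq (by simp [hg])) hn m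

end PadicInt

/-- If `f ∈ ℤ_p[[x]]` has `f(0) = 1` and we write `x f'(x)/f(x) = ∑ c_n x^n`, then all `c_n`
lie in `ℤ_p` (expressed as: there is a sequence `c : ℕ → ℤ_p` with
`x·f' = (∑ c_n x^n)·f`), and `c_{k p^{r+1}} ≡ c_{k p^r} (mod p^{r+1})` for all `k, r`. -/
theorem stmt_1 (p : ℕ) [Fact p.Prime] (f : PowerSeries ℤ_[p])
    (hf : constantCoeff f = 1) :
    ∃ c : ℕ → ℤ_[p],
      X * PowerSeries.derivative ℤ_[p] f = PowerSeries.mk c * f ∧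
      ∀ k r : ℕ, (p : ℤ_[p]) ^ (r + 1) ∣ c (k * p ^ (r + 1)) - c (k * p ^ r) := by
  have hp : p ≠ 0 := NeZero.ne p
  set u := (isUnit_iff_constantCoeff.mpr (hf ▸ isUnit_one)).unit
  refine ⟨fun n => coeff n (xLogDeriv u), ?_, fun k r => ?_⟩
  · calc X * d⁄dX ℤ_[p] f = xLogDeriv u * f := (xLogDeriv_mul_coe u).symm
      _ = _ := by
        congr
        ext n
        rw [coeff_mk]
  have h := PadicInt.pow_dvd_coeff_xLogDeriv (constantCoeff_frobeniusQuotient p hp hf)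
    (map_frobeniusQuotient_zmod PadicInt.toZMod u) (dvd_mul_left (p ^ (r + 1)) k)
  have hn : k * p ^ (r + 1) = p * (k * p ^ r) := by ring
  rw [xLogDeriv_frobeniusQuotient, map_nsmul, map_sub, hn, coeff_expand_mul, nsmul_eq_mul,
    pow_succ'] at h
  rw [hn]
  exact (mul_dvd_mul_iff_left (Nat.cast_ne_zero.mpr hp)).mp h
end

section
/- Let (c_n)_{n≥1} be a sequence in ℤ_p satisfying c_{k·p^{r+1}} ≡ c_{k·p^r} (mod p^{r+1}) for all k, r ∈ ℕ. Then the formal power series exp(∑_{n=1}^∞ (c_n/n) x^n) has all its coefficients in ℤ_p. -/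
/-!
Let `g = ∑ (c_n / n) xⁿ`, `F = exp g` and `h = p g - g(x^p)`. Since `exp` turns sums into
products, `F(x)^p = F(x^p) · exp h`. The congruences on `c` make `h ≡ 0 mod p`, and
then `exp h ≡ 1 mod p` because `p^k / k! ∈ p ℤ_p` for `k ≥ 1`.

Now induct on the degree. If the coefficients of `F` below `N` are integral, let `T` be that
truncation of `F`. On the left, the coefficient of `x^N` in `F^p` is that of `T^p` plus `p a_N`.
On the right, it is that of `T(x^p)`, modulo `p`. Frobenius gives `T^p ≡ T(x^p) mod p`, so
`p a_N ≡ 0 mod p`.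
-/

open PowerSeries Finset

namespace PowerSeries

section Exp

variable {A : Type*} [CommRing A] [Algebra ℚ A]

theorem eq_of_derivative_eq_mul {q f g : A⟦X⟧} (hf : d⁄dX A f = q * f)
    (hg : d⁄dX A g = q * g) (h0 : constantCoeff f = constantCoeff g) : f = g := by
  ext n
  induction n using Nat.strong_induction_on with
  | _ n ih =>
  rcases n with _ | m
  · simpa using h0
  have hq : coeff m (q * f) = coeff m (q * g) := by
    simp only [coeff_mul]
    refine sum_congr rfl fun x hx => ?_
    rw [ih x.2 (by rw [HasAntidiagonal.mem_antidiagonal] at hx; omega)]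
  rw [← hf, ← hg, coeff_derivative, coeff_derivative] at hq
  have hunit : IsUnit ((m : A) + 1) := by
    simpa using (Nat.cast_add_one_ne_zero m : (m : ℚ) + 1 ≠ 0).isUnit.map (algebraMap ℚ A)
  exact hunit.mul_left_inj.mp hq

variable {a b : A⟦X⟧}

theorem constantCoeff_exp_subst (ha : constantCoeff a = 0) :
    constantCoeff ((exp A).subst a) = 1 := by
  rw [← coeff_zero_eq_constantCoeff_apply, coeff_subst' (HasSubst.of_constantCoeff_zero' ha),
    finsum_eq_single _ 0]
  · simp
  · intro d hd
    rw [coeff_zero_eq_constantCoeff_apply, map_pow, ha, zero_pow hd, smul_zero]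

theorem derivative_exp_subst (ha : constantCoeff a = 0) :
    d⁄dX A ((exp A).subst a) = (exp A).subst a * d⁄dX A a := by
  rw [derivative_subst (HasSubst.of_constantCoeff_zero' ha), derivative_exp]

theorem exp_subst_zero : (exp A).subst (0 : A⟦X⟧) = 1 :=
  eq_of_derivative_eq_mul (q := 0)
    (by rw [derivative_exp_subst (map_zero _), map_zero, mul_zero, zero_mul])
    (by rw [Derivation.map_one_eq_zero, zero_mul])
    (by rw [constantCoeff_exp_subst (map_zero _), map_one])

theorem exp_subst_add (ha : constantCoeff a = 0) (hb : constantCoeff b = 0) :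
    (exp A).subst (a + b) = (exp A).subst a * (exp A).subst b := by
  have hab : constantCoeff (a + b) = 0 := by rw [map_add, ha, hb, add_zero]
  refine eq_of_derivative_eq_mul (q := d⁄dX A (a + b)) ?_ ?_ ?_
  · rw [derivative_exp_subst hab, mul_comm]
  · rw [Derivation.leibniz, derivative_exp_subst ha, derivative_exp_subst hb, map_add,
      smul_eq_mul, smul_eq_mul]
    ring
  · rw [map_mul, constantCoeff_exp_subst ha, constantCoeff_exp_subst hb,
      constantCoeff_exp_subst hab, mul_one]

theorem exp_subst_nsmul (ha : constantCoeff a = 0) (n : ℕ) :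
    (exp A).subst (n • a) = (exp A).subst a ^ n := by
  induction n with
  | zero => rw [zero_smul, exp_subst_zero, pow_zero]
  | succ n ih =>
    rw [succ_nsmul, exp_subst_add (by rw [map_nsmul, ha, nsmul_zero]) ha, ih, pow_succ]

theorem expand_exp_subst (p : ℕ) (hp : p ≠ 0) (ha : constantCoeff a = 0) :
    expand p hp ((exp A).subst a) = (exp A).subst (expand p hp a) :=
  expand_subst p hp (HasSubst.of_constantCoeff_zero' ha) _

end Exp

theorem coeff_exp_subst {K : Type*} [Field K] [Algebra ℚ K] {a : K⟦X⟧}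
    (ha : constantCoeff a = 0) (n : ℕ) :
    coeff n ((exp K).subst a) = ∑ k ∈ range (n + 1), coeff n (a ^ k) / k.factorial := by
  have hX : X ∣ a := X_dvd_iff.mpr ha
  rw [coeff_subst' (HasSubst.of_constantCoeff_zero' ha),
    finsum_eq_sum_of_support_subset (s := range (n + 1))]
  · refine sum_congr rfl fun k _ => ?_
    rw [coeff_exp, smul_eq_mul, map_div₀, map_one, map_natCast, one_div, inv_mul_eq_div]
  · intro k hk
    rw [Function.mem_support] at hk
    rw [coe_range, Set.mem_Iio, Nat.lt_succ_iff]
    by_contra! hnk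
    exact hk (by rw [X_pow_dvd_iff.mp (pow_dvd_pow_of_dvd hX k) n hnk, smul_zero])

theorem coeff_pow_add_X_pow_mul {R : Type*} [CommRing R] (f g : R⟦X⟧) {N : ℕ} (hN : N ≠ 0)
    (k : ℕ) : coeff N ((f + X ^ N * g) ^ k)
      = coeff N (f ^ k) + k * constantCoeff f ^ (k - 1) * constantCoeff g := by
  obtain ⟨u, hu⟩ := sq_dvd_add_pow_sub_sub (X ^ N * g) f k
  have hsplit : (f + X ^ N * g) ^ k
      = f ^ k + X ^ N * ((k : R⟦X⟧) * f ^ (k - 1) * g) + X ^ (N + N) * (g ^ 2 * u) := by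
    rw [sub_sub, sub_eq_iff_eq_add] at hu
    rw [hu]
    ring
  rw [hsplit, map_add, map_add, coeff_X_pow_mul', if_pos le_rfl, Nat.sub_self,
    coeff_X_pow_mul', if_neg (by omega), add_zero, coeff_zero_eq_constantCoeff_apply]
  simp only [map_mul, map_pow, map_natCast]

theorem coeff_expand_add_X_pow_mul_mul {R : Type*} [CommRing R] (p : ℕ) (hp : p ≠ 0)
    (f g h : R⟦X⟧) {N : ℕ} (hN : N < p * N) :
    coeff N (expand p hp (f + X ^ N * g) * h) = coeff N (expand p hp f * h) := by
  rw [map_add (expand p hp), map_mul (expand p hp), map_pow (expand p hp), expand_X, ← pow_mul,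
    add_mul, map_add, mul_assoc, coeff_X_pow_mul', if_neg hN.not_ge, add_zero]

theorem norm_coeff_expand_le {R : Type*} [NormedCommRing R] (p : ℕ) (hp : p ≠ 0) {f : R⟦X⟧}
    {r : ℝ} (hf : ∀ n, ‖coeff n f‖ ≤ r) (n : ℕ) : ‖coeff n (expand p hp f)‖ ≤ r := by
  rw [coeff_expand]
  split_ifs
  · exact hf _
  · exact norm_zero.trans_le ((norm_nonneg _).trans (hf 0))

section Ultrametric

variable {R : Type*} [NormedCommRing R] [IsUltrametricDist R] {f g : R⟦X⟧} {r s : ℝ}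

theorem norm_coeff_mul_le (hf : ∀ n, ‖coeff n f‖ ≤ r) (hg : ∀ n, ‖coeff n g‖ ≤ s) (n : ℕ) :
    ‖coeff n (f * g)‖ ≤ r * s := by
  have hr : 0 ≤ r := (norm_nonneg _).trans (hf 0)
  have hs : 0 ≤ s := (norm_nonneg _).trans (hg 0)
  rw [coeff_mul]
  refine IsUltrametricDist.norm_sum_le_of_forall_le_of_nonneg (mul_nonneg hr hs) fun x _ => ?_
  exact (norm_mul_le _ _).trans (mul_le_mul (hf _) (hg _) (norm_nonneg _) hr)

theorem norm_coeff_pow_le [NormOneClass R] (hf : ∀ n, ‖coeff n f‖ ≤ r) (k n : ℕ) :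
    ‖coeff n (f ^ k)‖ ≤ r ^ k := by
  induction k generalizing n with
  | zero =>
    rw [pow_zero, pow_zero, coeff_one]
    split_ifs <;> simp
  | succ k ih =>
    rw [pow_succ, pow_succ]
    exact norm_coeff_mul_le ih hf n

end Ultrametric

end PowerSeries

section

variable {p : ℕ} [hp : Fact p.Prime]

theorem PadicInt.dvd_coeff_pow_sub_coeff_expand (f : ℤ_[p]⟦X⟧) (n : ℕ) :
    (p : ℤ_[p]) ∣ coeff n (f ^ p) - coeff n (expand p hp.out.ne_zero f) := by
  have hfrob : (map toZMod f) ^ p = expand p hp.out.ne_zero (map toZMod f) := by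
    rw [← MvPowerSeries.map_frobenius_expand p hp.out.ne_zero, ZMod.frobenius_zmod,
      MvPowerSeries.map_id]
    rfl
  rw [← Ideal.mem_span_singleton, ← maximalIdeal_eq_span_p, ← ker_toZMod, RingHom.mem_ker,
    map_sub, sub_eq_zero, ← coeff_map, ← coeff_map, map_pow, hfrob, map_expand]

namespace Padic

theorem norm_p_pow_div_factorial_le {k : ℕ} (hk : k ≠ 0) :
    ‖(p : ℚ_[p]) ^ k / k.factorial‖ ≤ ‖(p : ℚ_[p])‖ := by
  have hv := padicValNat_factorial_lt_of_ne_zero p hk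
  have hp1 : (1 : ℝ) ≤ p := by exact_mod_cast hp.out.one_le
  rw [norm_div, norm_p_pow, norm_p,
    norm_eq_zpow_neg_valuation (by exact_mod_cast k.factorial_ne_zero), valuation_natCast,
    ← zpow_sub₀ (by positivity), ← zpow_neg_one]
  exact zpow_le_zpow_right₀ hp1 (by omega)

theorem norm_coeff_exp_subst_sub_one_le {v : ℚ_[p]⟦X⟧} (hv0 : constantCoeff v = 0)
    (hv : ∀ n, ‖coeff n v‖ ≤ ‖(p : ℚ_[p])‖) (n : ℕ) :
    ‖coeff n ((exp ℚ_[p]).subst v - 1)‖ ≤ ‖(p : ℚ_[p])‖ := by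
  rw [map_sub, coeff_exp_subst hv0, sum_range_succ', pow_zero, Nat.factorial_zero,
    Nat.cast_one, div_one, add_sub_cancel_right]
  refine IsUltrametricDist.norm_sum_le_of_forall_le_of_nonneg (norm_nonneg _) fun k _ => ?_
  calc ‖coeff n (v ^ (k + 1)) / (k + 1).factorial‖
      ≤ ‖(p : ℚ_[p]) ^ (k + 1)‖ / ‖((k + 1).factorial : ℚ_[p])‖ := by
        rw [norm_div, norm_pow]
        gcongr
        exact norm_coeff_pow_le hv _ _
    _ ≤ ‖(p : ℚ_[p])‖ := by
        rw [← norm_div]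
        exact norm_p_pow_div_factorial_le k.succ_ne_zero

theorem norm_coeff_pow_sub_coeff_expand_le {f : ℚ_[p]⟦X⟧} (hf : ∀ n, ‖coeff n f‖ ≤ 1)
    (n : ℕ) : ‖coeff n (f ^ p) - coeff n (expand p hp.out.ne_zero f)‖ ≤ ‖(p : ℚ_[p])‖ := by
  choose a ha using fun n => (⟨⟨coeff n f, hf n⟩, rfl⟩ : ∃ x : ℤ_[p], (x : ℚ_[p]) = coeff n f)
  have hf₀ : map PadicInt.Coe.ringHom (PowerSeries.mk a) = f := by
    ext n
    rw [coeff_map, coeff_mk]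
    exact ha n
  obtain ⟨y, hy⟩ := PadicInt.dvd_coeff_pow_sub_coeff_expand (PowerSeries.mk a) n
  rw [← hf₀, ← map_pow, ← map_expand, coeff_map, coeff_map, ← map_sub, hy, map_mul,
    map_natCast, norm_mul]
  exact mul_le_of_le_one_right (norm_nonneg _) (PadicInt.norm_le_one y)

theorem norm_coeff_le_one_of_pow_eq_expand_mul {F H : ℚ_[p]⟦X⟧} (hF : constantCoeff F = 1)
    (hH : ∀ n, ‖coeff n (H - 1)‖ ≤ ‖(p : ℚ_[p])‖)
    (hFH : F ^ p = expand p hp.out.ne_zero F * H) (N : ℕ) : ‖coeff N F‖ ≤ 1 := by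
  induction N using Nat.strong_induction_on with
  | _ N ih =>
  rcases eq_or_ne N 0 with rfl | hN
  · rw [coeff_zero_eq_constantCoeff_apply, hF, norm_one]
  set T : ℚ_[p]⟦X⟧ := (trunc N F : ℚ_[p]⟦X⟧)
  have hT : ∀ n, ‖coeff n T‖ ≤ 1 := fun n => by
    rw [Polynomial.coeff_coe, coeff_trunc]
    split_ifs with hn
    · exact ih n hn
    · rw [norm_zero]
      exact zero_le_one
  have hT0 : constantCoeff T = 1 := by
    rw [← coeff_zero_eq_constantCoeff_apply, Polynomial.coeff_coe, coeff_trunc,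
      if_pos (Nat.pos_of_ne_zero hN), coeff_zero_eq_constantCoeff_apply, hF]
  obtain ⟨D, hD⟩ : X ^ N ∣ F - T := X_pow_dvd_iff.mpr fun m hm => by
    rw [map_sub, Polynomial.coeff_coe, coeff_trunc, if_pos hm, sub_self]
  rw [sub_eq_iff_eq_add'] at hD
  have hFN : coeff N F = constantCoeff D := by
    rw [hD, map_add, Polynomial.coeff_coe, coeff_trunc, if_neg (lt_irrefl N), zero_add,
      coeff_X_pow_mul', if_pos le_rfl, Nat.sub_self, coeff_zero_eq_constantCoeff_apply]
  have hRHS := coeff_expand_add_X_pow_mul_mul p hp.out.ne_zero T D H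
    (lt_mul_left (Nat.pos_of_ne_zero hN) hp.out.one_lt)
  have hLHS := coeff_pow_add_X_pow_mul T D hN p
  rw [← hD] at hRHS hLHS
  rw [hT0, one_pow, mul_one, hFH, hRHS] at hLHS
  have hpD : (p : ℚ_[p]) * constantCoeff D = coeff N (expand p hp.out.ne_zero T * (H - 1))
      + (coeff N (expand p hp.out.ne_zero T) - coeff N (T ^ p)) := by
    rw [mul_sub, mul_one, map_sub]
    linear_combination -hLHS
  have hbound : ‖(p : ℚ_[p])‖ * ‖constantCoeff D‖ ≤ ‖(p : ℚ_[p])‖ := by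
    rw [← norm_mul, hpD]
    refine (IsUltrametricDist.norm_add_le_max _ _).trans (max_le ?_ ?_)
    · simpa using norm_coeff_mul_le (norm_coeff_expand_le p hp.out.ne_zero hT) hH N
    · rw [norm_sub_rev]
      exact norm_coeff_pow_sub_coeff_expand_le hT N
  rw [hFN]
  exact (mul_le_iff_le_one_right (norm_pos_iff.mpr (by exact_mod_cast hp.out.ne_zero))).mp hbound

variable {c : ℕ → ℤ_[p]}

theorem norm_sub_div_le_of_pow_dvd
    (hc : ∀ k r : ℕ, (p : ℤ_[p]) ^ (r + 1) ∣ c (k * p ^ (r + 1)) - c (k * p ^ r))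
    {m : ℕ} (hm : m ≠ 0) : ‖((c (p * m) : ℚ_[p]) - c m) / m‖ ≤ ‖(p : ℚ_[p])‖ := by
  obtain ⟨r, k, hk, rfl⟩ := Nat.exists_eq_pow_mul_and_not_dvd hm p hp.out.ne_one
  obtain ⟨y, hy⟩ := hc k r
  have hk0 : (k : ℚ_[p]) ≠ 0 := Nat.cast_ne_zero.mpr (by rintro rfl; exact hk (dvd_zero p))
  have hp0 : (p : ℚ_[p]) ≠ 0 := by exact_mod_cast hp.out.ne_zero
  have hdiff : (c (k * p ^ (r + 1)) : ℚ_[p]) - c (k * p ^ r) = (p : ℚ_[p]) ^ (r + 1) * y := by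
    exact_mod_cast congrArg ((↑) : ℤ_[p] → ℚ_[p]) hy
  have hquot : ((c (p * (p ^ r * k)) : ℚ_[p]) - c (p ^ r * k)) / ((p ^ r * k : ℕ) : ℚ_[p])
      = p * y / k := by
    rw [show p * (p ^ r * k) = k * p ^ (r + 1) by ring, show p ^ r * k = k * p ^ r by ring, hdiff]
    push_cast
    field_simp
    ring
  rw [hquot, norm_div, norm_mul, (norm_natCast_eq_one_iff (p := p)).mpr
    ((Nat.Prime.coprime_iff_not_dvd hp.out).mpr hk), div_one, PadicInt.padic_norm_e_of_padicInt]
  exact mul_le_of_le_one_right (norm_nonneg _) (PadicInt.norm_le_one y)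

theorem norm_coeff_nsmul_sub_expand_le {g : ℚ_[p]⟦X⟧} (hg0 : constantCoeff g = 0)
    (hg : ∀ n ≠ 0, coeff n g = c n / n)
    (hc : ∀ k r : ℕ, (p : ℤ_[p]) ^ (r + 1) ∣ c (k * p ^ (r + 1)) - c (k * p ^ r)) (n : ℕ) :
    ‖coeff n (p • g - expand p hp.out.ne_zero g)‖ ≤ ‖(p : ℚ_[p])‖ := by
  have hp0 : (p : ℚ_[p]) ≠ 0 := by exact_mod_cast hp.out.ne_zero
  rcases eq_or_ne n 0 with rfl | hn
  · rw [coeff_zero_eq_constantCoeff_apply, map_sub, constantCoeff_expand, map_nsmul, hg0,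
      nsmul_zero, sub_zero, norm_zero]
    exact norm_nonneg _
  rw [map_sub, map_nsmul, nsmul_eq_mul, coeff_expand, hg n hn]
  split_ifs with hpn
  · obtain ⟨m, rfl⟩ := hpn
    have hm : m ≠ 0 := by
      rintro rfl
      exact hn (mul_zero p)
    rw [Nat.mul_div_cancel_left m hp.out.pos, hg m hm]
    convert norm_sub_div_le_of_pow_dvd hc hm using 2
    push_cast
    field_simp
  · rw [sub_zero, mul_div_assoc', norm_div, norm_mul,
      (norm_natCast_eq_one_iff (p := p)).mpr ((Nat.Prime.coprime_iff_not_dvd hp.out).mpr hpn),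
      div_one, PadicInt.padic_norm_e_of_padicInt]
    exact mul_le_of_le_one_right (norm_nonneg _) (PadicInt.norm_le_one _)

end Padic

end

/-- If `(c_n)` in `ℤ_p` satisfies `c_{k p^{r+1}} ≡ c_{k p^r} (mod p^{r+1})` for all `k, r`,
then `exp (∑_{n ≥ 1} (c_n/n) x^n)` has all its coefficients in `ℤ_p`: the `N`-th coefficient of
the formal exponential, namely `∑_{k ≤ N} coeff_N (g^k)/k!` where `g = ∑_{n ≥ 1} (c_n/n) x^n`,
has `p`-adic norm at most `1`. -/
theorem stmt_3 (p : ℕ) [Fact p.Prime] (c : ℕ → ℤ_[p])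
    (hc : ∀ k r : ℕ, (p : ℤ_[p]) ^ (r + 1) ∣ c (k * p ^ (r + 1)) - c (k * p ^ r)) :
    ∀ N : ℕ, ‖∑ k ∈ Finset.range (N + 1),
        (coeff (R := ℚ_[p]) N
          ((PowerSeries.mk fun n => if n = 0 then 0 else ((c n : ℚ_[p]) / (n : ℚ_[p]))) ^ k))
          / (k.factorial : ℚ_[p])‖ ≤ 1 := by
  intro N
  set g : ℚ_[p]⟦X⟧ := PowerSeries.mk fun n => if n = 0 then 0 else ((c n : ℚ_[p]) / (n : ℚ_[p]))
  have hg0 : constantCoeff g = 0 := by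
    rw [← coeff_zero_eq_constantCoeff_apply, coeff_mk, if_pos rfl]
  have hg : ∀ n ≠ 0, coeff n g = c n / n := fun n hn => by rw [coeff_mk, if_neg hn]
  have hp : p ≠ 0 := (Fact.out : p.Prime).ne_zero
  set h := p • g - expand p hp g
  have hexpand0 : constantCoeff (expand p hp g) = 0 := by rw [constantCoeff_expand, hg0]
  have hh0 : constantCoeff h = 0 := by
    rw [map_sub, map_nsmul, hg0, hexpand0, nsmul_zero, sub_zero]
  have hfun : (exp ℚ_[p]).subst g ^ p
      = expand p hp ((exp ℚ_[p]).subst g) * (exp ℚ_[p]).subst h := by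
    rw [← exp_subst_nsmul hg0, expand_exp_subst p hp hg0, ← exp_subst_add hexpand0 hh0,
      add_sub_cancel]
  rw [← coeff_exp_subst hg0]
  have hH := Padic.norm_coeff_exp_subst_sub_one_le hh0
    (Padic.norm_coeff_nsmul_sub_expand_le hg0 hg hc)
  exact Padic.norm_coeff_le_one_of_pow_eq_expand_mul (constantCoeff_exp_subst hg0) hH hfun N
end

section
/- With c_n and s(x) as defined by the recurrence 4(n+4)c_{n+5}+8(n+2)c_{n+4}+(n+3)c_{n+3}+(4n+7)c_{n+2}+(5n+4)c_{n+1}+2n c_n=0 with initial data c_0=0, c_1=1, c_2=2, c_3=-1/8, c_4=-1/2, the generating function satisfies the algebraic relation s(x)² · (4 + x² + 2x³ + x⁴) = 4x²(2x+1)² in ℚ[[x]]. -/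
/-!
The recurrence says that `s = ∑ cₙ xⁿ` solves the first-order Euler-type equation
`(1 + 2x) Q · x s' = P s` with `Q = 4 + x² + 2x³ + x⁴` and `P = 4 + 16x + x³ + x⁴`; here
`(1 + 2x) Q = 4 + 8x + x² + 4x³ + 5x⁴ + 2x⁵` collects the coefficients of `n` in the recurrence.
Consequently both `s² Q` and `4x²(2x + 1)²` solve `(1 + 2x) · x y' = 2(1 + 4x) y`. Comparing
lowest-order terms, a nonzero solution of this equation has order exactly `2`, so two solutions
agreeing up to `x²` coincide.
-/

open PowerSeries

namespace PowerSeries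

variable {R : Type*}

@[simp]
lemma coeff_ofNat_mul [Semiring R] {a n : ℕ} [a.AtLeastTwo] (f : R⟦X⟧) :
    coeff n ((ofNat(a) : R⟦X⟧) * f) = ofNat(a) * coeff n f := by
  rw [← map_ofNat C, coeff_C_mul]

@[simp]
lemma derivative_ofNat [CommSemiring R] {a : ℕ} [a.AtLeastTwo] :
    d⁄dX R (ofNat(a) : R⟦X⟧) = 0 := by
  rw [← map_ofNat C, derivative_C]

lemma X_mul_derivative_mk [CommSemiring R] (f : ℕ → R) :
    X * d⁄dX R (mk f) = mk fun n => n * f n := by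
  ext (_ | n)
  · simp
  · rw [coeff_succ_X_mul, coeff_derivative, coeff_mk, coeff_mk, mul_comm]
    push_cast
    rfl

lemma X_mul_derivative_X_pow_mul [CommSemiring R] (n : ℕ) (u : R⟦X⟧) :
    X * d⁄dX R (X ^ n * u) = X ^ n * ((n : R⟦X⟧) * u + X * d⁄dX R u) := by
  cases n with
  | zero => simp
  | succ n =>
    rw [Derivation.leibniz, Derivation.leibniz_pow, derivative_X]
    simp only [smul_eq_mul, nsmul_eq_mul, Nat.add_sub_cancel]
    push_cast
    ring

/-- Writing `g = Xⁿ u` with `u(0) ≠ 0`, the constant term of the equation for `u` reads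
`(n a(0) - b(0)) u(0) = 0`. -/
theorem eq_zero_of_mul_X_mul_derivative_eq [CommRing R] [IsDomain R] {a b g : R⟦X⟧}
    (hg : a * (X * d⁄dX R g) = b * g) {n₀ : ℕ}
    (hab : ∀ n ≥ n₀, (n : R) * constantCoeff a ≠ constantCoeff b)
    (hg₀ : ∀ n < n₀, coeff n g = 0) : g = 0 := by
  by_contra hne
  set n := g.order.toNat
  have hn : n₀ ≤ n := by
    by_contra! hlt
    exact coeff_order hne (hg₀ n hlt)
  set u := divXPowOrder g
  have hu : a * ((n : R⟦X⟧) * u + X * d⁄dX R u) = b * u := by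
    apply mul_left_cancel₀ (pow_ne_zero n (X_ne_zero (R := R)))
    rw [← X_pow_order_mul_divXPowOrder (f := g), X_mul_derivative_X_pow_mul] at hg
    linear_combination hg
  have hu0 : ((n : R) * constantCoeff a - constantCoeff b) * constantCoeff u = 0 := by
    have := congrArg constantCoeff hu
    simp only [map_mul, map_add, map_natCast, constantCoeff_X, zero_mul, add_zero] at this
    linear_combination this
  rcases mul_eq_zero.mp hu0 with h | h
  · exact hab n hn (sub_eq_zero.mp h)
  · exact hne (constantCoeff_divXPowOrder_eq_zero_iff.mp h)

theorem eq_of_mul_X_mul_derivative_eq [CommRing R] [IsDomain R] {a b y z : R⟦X⟧}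
    (hy : a * (X * d⁄dX R y) = b * y) (hz : a * (X * d⁄dX R z) = b * z) {n₀ : ℕ}
    (hab : ∀ n ≥ n₀, (n : R) * constantCoeff a ≠ constantCoeff b)
    (hyz : ∀ n < n₀, coeff n y = coeff n z) : y = z := by
  refine sub_eq_zero.mp (eq_zero_of_mul_X_mul_derivative_eq ?_ hab fun n hn => ?_)
  · rw [map_sub, mul_sub, mul_sub, mul_sub, hy, hz]
  · rw [map_sub, hyz n hn, sub_self]

end PowerSeries

section

variable {R : Type*} [CommRing R]

lemma ode_mk_of_recurrence (c : ℕ → ℚ) (h0 : c 0 = 0) (h1 : c 1 = 1) (h2 : c 2 = 2)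
    (h3 : c 3 = -1/8) (h4 : c 4 = -1/2)
    (hrec : ∀ n : ℕ,
      4 * ((n : ℚ) + 4) * c (n + 5) + 8 * ((n : ℚ) + 2) * c (n + 4)
        + ((n : ℚ) + 3) * c (n + 3) + (4 * (n : ℚ) + 7) * c (n + 2)
        + (5 * (n : ℚ) + 4) * c (n + 1) + 2 * (n : ℚ) * c n = 0) :
    (1 + 2 * X) * (4 + X ^ 2 + 2 * X ^ 3 + X ^ 4) * (X * d⁄dX ℚ (mk c))
      = (4 + 16 * X + X ^ 3 + X ^ 4) * mk c := by
  rw [show (1 + 2 * X) * (4 + X ^ 2 + 2 * X ^ 3 + X ^ 4) =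
    (4 + 8 * X + X ^ 2 + 4 * X ^ 3 + 5 * X ^ 4 + 2 * X ^ 5 : ℚ⟦X⟧) by ring, X_mul_derivative_mk]
  ext n
  rcases le_or_gt 5 n with hn | hn
  · obtain ⟨m, rfl⟩ := Nat.exists_eq_add_of_le' hn
    simp only [add_mul, mul_assoc, map_add, coeff_ofNat_mul, coeff_succ_X_mul, coeff_X_pow_mul',
      coeff_mk, le_add_iff_nonneg_left, zero_le, ↓reduceIte, Nat.reduceSubDiff,
      add_tsub_cancel_right]
    push_cast
    linear_combination hrec m
  · interval_cases n <;> simp [add_mul, mul_assoc, coeff_X_pow_mul', coeff_mk, h0, h1, h2, h3, h4]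
      <;> norm_num

lemma ode_sq_mul_of_ode {s : R⟦X⟧}
    (hs : (1 + 2 * X) * (4 + X ^ 2 + 2 * X ^ 3 + X ^ 4) * (X * d⁄dX R s)
      = (4 + 16 * X + X ^ 3 + X ^ 4) * s) :
    (1 + 2 * X) * (X * d⁄dX R (s ^ 2 * (4 + X ^ 2 + 2 * X ^ 3 + X ^ 4)))
      = 2 * (1 + 4 * X) * (s ^ 2 * (4 + X ^ 2 + 2 * X ^ 3 + X ^ 4)) := by
  simp only [Derivation.leibniz, Derivation.leibniz_pow, map_add, derivative_ofNat, derivative_X,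
    smul_eq_mul, nsmul_eq_mul]
  push_cast
  linear_combination (2 * s) * hs

lemma ode_four_mul_X_sq_mul_sq :
    (1 + 2 * X) * (X * d⁄dX R (4 * X ^ 2 * (2 * X + 1) ^ 2))
      = 2 * (1 + 4 * X) * (4 * X ^ 2 * (2 * X + 1) ^ 2 : R⟦X⟧) := by
  simp only [Derivation.leibniz, Derivation.leibniz_pow, map_add, derivative_ofNat, derivative_X,
    Derivation.map_one_eq_zero, smul_eq_mul, nsmul_eq_mul]
  push_cast
  ring

lemma coeff_mk_sq_mul_eq_of_lt_three {c : ℕ → R} (h0 : c 0 = 0) (h1 : c 1 = 1) :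
    ∀ n < 3, coeff n (mk c ^ 2 * (4 + X ^ 2 + 2 * X ^ 3 + X ^ 4))
      = coeff n (4 * X ^ 2 * (2 * X + 1) ^ 2 : R⟦X⟧) := by
  intro n hn
  interval_cases n <;> simp [pow_two, coeff_mul, Finset.Nat.sum_antidiagonal_eq_sum_range_succ_mk,
    Finset.sum_range_succ, map_ofNat, h0, h1]

end

/-- The generating function `s(x)` of the sequence defined by the stated recurrence and
initial data satisfies the algebraic relation `s(x)²·(4 + x² + 2x³ + x⁴) = 4x²(2x+1)²`. -/
theorem stmt_7 (c : ℕ → ℚ) (h0 : c 0 = 0) (h1 : c 1 = 1) (h2 : c 2 = 2)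
    (h3 : c 3 = -1/8) (h4 : c 4 = -1/2)
    (hrec : ∀ n : ℕ,
      4 * ((n : ℚ) + 4) * c (n + 5) + 8 * ((n : ℚ) + 2) * c (n + 4)
        + ((n : ℚ) + 3) * c (n + 3) + (4 * (n : ℚ) + 7) * c (n + 2)
        + (5 * (n : ℚ) + 4) * c (n + 1) + 2 * (n : ℚ) * c n = 0) :
    (PowerSeries.mk c) ^ 2 * (4 + X ^ 2 + 2 * X ^ 3 + X ^ 4 : PowerSeries ℚ)
      = 4 * X ^ 2 * (2 * X + 1) ^ 2 := by
  refine eq_of_mul_X_mul_derivative_eq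
    (ode_sq_mul_of_ode (ode_mk_of_recurrence c h0 h1 h2 h3 h4 hrec))
    ode_four_mul_X_sq_mul_sq (n₀ := 3) (fun n hn => ?_) (coeff_mk_sq_mul_eq_of_lt_three h0 h1)
  have hn2 : (n : ℚ) ≠ 2 := by norm_cast; omega
  simpa [map_ofNat] using hn2
end

section
/- With c_n defined by the recurrence 4(n+4)c_{n+5}+8(n+2)c_{n+4}+(n+3)c_{n+3}+(4n+7)c_{n+2}+(5n+4)c_{n+1}+2n c_n=0 and c_0=0, c_1=1, c_2=2, c_3=-1/8, c_4=-1/2, the number 2^{2n-2}·c_n is an integer for every n ≥ 1; in particular the denominator of each c_n is a power of 2. -/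
/-!
Put `w = x(1 + x)`. The generating function of `c` is `x(1 + 2x) G(x)` with
`G = (1 + w²/4)^(-1/2) = ∑ₖ (-1)ᵏ C(2k, k) 16⁻ᵏ w^(2k)`. As `w^(2k)` starts at `x^(2k)`, the factor
`4^j` clears the denominator of the `x^j`-coefficient of `G`. The recurrence is the coefficient
form of the differential equation `(4 + w²) G' + w w' G = 0`, and the truncations of the series
for `G` satisfy it up to an error of high order, which is all the coefficient comparison needs.
-/

open Polynomial Finset

namespace DyadicRecurrence

noncomputable def invSqrtCoeff (k : ℕ) : ℚ := (-1) ^ k * k.centralBinom / 16 ^ k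

lemma invSqrtCoeff_succ (k : ℕ) :
    8 * ((k : ℚ) + 1) * invSqrtCoeff (k + 1) + (2 * k + 1) * invSqrtCoeff k = 0 := by
  have h : ((k + 1 : ℕ) : ℚ) * (k + 1).centralBinom = 2 * (2 * k + 1) * k.centralBinom := by
    exact_mod_cast Nat.succ_mul_centralBinom_succ k
  simp only [invSqrtCoeff]
  push_cast at h
  linear_combination (-(-1 : ℚ) ^ k / (2 * 16 ^ k)) * h

noncomputable def w : ℚ[X] := X * (X + 1)

lemma derivative_w : derivative w = 2 * X + 1 := by
  simp only [w, derivative_mul, derivative_X, derivative_add, derivative_one]; ring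

lemma coeff_w_pow (n j : ℕ) :
    (w ^ n).coeff j = if n ≤ j then (n.choose (j - n) : ℚ) else 0 := by
  rw [w, mul_pow, coeff_X_pow_mul', coeff_X_add_one_pow]

noncomputable def partialSum (N : ℕ) : ℚ[X] :=
  ∑ k ∈ range N, C (invSqrtCoeff k) * w ^ (2 * k)

lemma partialSum_succ (N : ℕ) :
    partialSum (N + 1) = partialSum N + C (invSqrtCoeff N) * w ^ (2 * N) :=
  sum_range_succ _ _

lemma coeff_partialSum (N j : ℕ) :
    (partialSum N).coeff j
      = ∑ k ∈ range N,
          invSqrtCoeff k * if 2 * k ≤ j then ((2 * k).choose (j - 2 * k) : ℚ) else 0 := by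
  simp only [partialSum, finsetSum_coeff, coeff_C_mul, coeff_w_pow]

lemma X_pow_dvd_partialSum_sub {N M : ℕ} (h : N ≤ M) :
    X ^ (2 * N) ∣ partialSum M - partialSum N := by
  rw [partialSum, partialSum, ← sum_Ico_eq_sub _ h]
  refine dvd_sum fun k hk => dvd_mul_of_dvd_right ?_ _
  rw [w, mul_pow]
  exact dvd_mul_of_dvd_left (pow_dvd_pow _ (by simp at hk; omega)) _

lemma coeff_mul_partialSum_of_lt (p : ℚ[X]) {j N M : ℕ} (hN : j < 2 * N) (hM : j < 2 * M) :
    (p * partialSum M).coeff j = (p * partialSum N).coeff j := by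
  wlog h : N ≤ M generalizing N M
  · exact (this hM hN (by omega)).symm
  rw [← sub_eq_zero, ← coeff_sub, ← mul_sub]
  exact X_pow_dvd_iff.mp ((X_pow_dvd_partialSum_sub h).mul_left p) j hN

lemma partialSum_ode (N : ℕ) :
    (4 + w ^ 2) * derivative (partialSum (N + 1)) + (2 * X + 1) * w * partialSum (N + 1)
      = C ((2 * N + 1) * invSqrtCoeff N) * (2 * X + 1) * w ^ (2 * N + 1) := by
  induction N with
  | zero => simp [partialSum, invSqrtCoeff]
  | succ N ih =>
    have hd : derivative (C (invSqrtCoeff (N + 1)) * w ^ (2 * (N + 1)))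
        = C (invSqrtCoeff (N + 1)) * (2 * ((N : ℚ[X]) + 1)) * w ^ (2 * N + 1) * (2 * X + 1) := by
      rw [derivative_C_mul, derivative_pow, derivative_w,
        show 2 * (N + 1) - 1 = 2 * N + 1 by omega, map_natCast]
      push_cast; ring
    have hq : C ((2 * N + 1) * invSqrtCoeff N)
        = -C (invSqrtCoeff (N + 1)) * (8 * ((N : ℚ[X]) + 1)) := by
      rw [← map_neg, show (8 * ((N : ℚ[X]) + 1)) = C (8 * ((N : ℚ) + 1)) by simp [map_ofNat],
        ← C_mul]
      congr 1
      linear_combination invSqrtCoeff_succ N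
    rw [partialSum_succ (N + 1), derivative_add, hd, C_mul]
    simp only [map_add, map_mul, map_natCast, map_one, map_ofNat C, Nat.cast_add, Nat.cast_one]
    rw [hq] at ih
    linear_combination ih

def SatisfiesRec (c : ℕ → ℚ) : Prop :=
  ∀ n : ℕ,
    4 * ((n : ℚ) + 4) * c (n + 5) + 8 * ((n : ℚ) + 2) * c (n + 4)
      + ((n : ℚ) + 3) * c (n + 3) + (4 * (n : ℚ) + 7) * c (n + 2)
      + (5 * (n : ℚ) + 4) * c (n + 1) + 2 * (n : ℚ) * c n = 0

lemma eq_of_satisfiesRec {c d : ℕ → ℚ} (hc : SatisfiesRec c) (hd : SatisfiesRec d)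
    (h : ∀ n < 5, c n = d n) : c = d := by
  funext n
  induction n using Nat.strong_induction_on with
  | _ n ih =>
    rcases lt_or_ge n 5 with hn | hn
    · exact h n hn
    obtain ⟨k, rfl⟩ : ∃ k, n = k + 5 := ⟨n - 5, by omega⟩
    have hk : 4 * ((k : ℚ) + 4) ≠ 0 := by positivity
    apply mul_left_cancel₀ hk
    linear_combination hc k - hd k - 8 * ((k : ℚ) + 2) * ih (k + 4) (by omega)
      - ((k : ℚ) + 3) * ih (k + 3) (by omega) - (4 * (k : ℚ) + 7) * ih (k + 2) (by omega)
      - (5 * (k : ℚ) + 4) * ih (k + 1) (by omega) - 2 * (k : ℚ) * ih k (by omega)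

noncomputable def recurrenceOp (T : ℚ[X]) : ℚ[X] :=
  (4 + w ^ 2) * (X * (2 * X + 1) * derivative T - (4 * X + 1) * T)
    + (2 * X + 1) * w * (X * (2 * X + 1)) * T

lemma recurrenceOp_X_mul (S : ℚ[X]) :
    recurrenceOp (X * (2 * X + 1) * S)
      = (X * (2 * X + 1)) ^ 2 * ((4 + w ^ 2) * derivative S + (2 * X + 1) * w * S) := by
  simp only [recurrenceOp, derivative_mul, derivative_X, derivative_add, derivative_one,
    derivative_ofNat]
  ring

lemma coeff_recurrenceOp (T : ℚ[X]) (n : ℕ) :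
    (recurrenceOp T).coeff (n + 5)
      = 4 * ((n : ℚ) + 4) * T.coeff (n + 5) + 8 * ((n : ℚ) + 2) * T.coeff (n + 4)
        + ((n : ℚ) + 3) * T.coeff (n + 3) + (4 * (n : ℚ) + 7) * T.coeff (n + 2)
        + (5 * (n : ℚ) + 4) * T.coeff (n + 1) + 2 * (n : ℚ) * T.coeff n := by
  have h : recurrenceOp T
      = C 4 * X * derivative T + C 8 * X ^ 2 * derivative T + X ^ 3 * derivative T
        + C 4 * X ^ 4 * derivative T + C 5 * X ^ 5 * derivative T + C 2 * X ^ 6 * derivative T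
        - C 4 * T - C 16 * X * T - X ^ 3 * T - X ^ 4 * T := by
    simp only [recurrenceOp, w, map_ofNat C]; ring
  rw [h]
  simp only [coeff_add, coeff_sub, mul_assoc, coeff_C_mul, coeff_X_pow_mul', coeff_X_mul,
    coeff_derivative]
  rcases n with _ | n
  · norm_num; ring
  · simp (disch := omega) only [if_pos, Nat.reduceSubDiff, add_tsub_cancel_right]
    push_cast
    ring

noncomputable def solution (n : ℕ) : ℚ := (X * (2 * X + 1) * partialSum (n + 1)).coeff n

lemma solution_eq_coeff {n N : ℕ} (h : n < 2 * N) :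
    solution n = (X * (2 * X + 1) * partialSum N).coeff n :=
  coeff_mul_partialSum_of_lt _ h (by omega)

lemma satisfiesRec_solution : SatisfiesRec solution := by
  intro n
  set T := X * (2 * X + 1) * partialSum (n + 3 + 1)
  have hT : ∀ k ≤ n + 5, solution k = T.coeff k := fun k hk => solution_eq_coeff (by omega)
  rw [hT n (by omega), hT (n + 1) (by omega), hT (n + 2) (by omega), hT (n + 3) (by omega),
    hT (n + 4) (by omega), hT (n + 5) le_rfl, ← coeff_recurrenceOp, recurrenceOp_X_mul,
    partialSum_ode]
  have hdvd : X ^ (2 * (n + 3) + 1) ∣ w ^ (2 * (n + 3) + 1) :=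
    pow_dvd_pow_of_dvd (dvd_mul_right X (X + 1)) _
  exact X_pow_dvd_iff.mp ((hdvd.mul_left _).mul_left _) _ (by omega)

lemma solution_zero : solution 0 = 0 := by simp [solution]

lemma solution_one : solution 1 = 1 := by
  simp [solution, mul_assoc, coeff_X_mul, mul_coeff_zero, coeff_partialSum, invSqrtCoeff]

lemma solution_add_two (j : ℕ) :
    solution (j + 2) = (partialSum (j + 3)).coeff (j + 1) + 2 * (partialSum (j + 3)).coeff j := by
  rw [solution, mul_assoc, coeff_X_mul, add_mul, coeff_add, mul_assoc, coeff_ofNat_mul,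
    coeff_X_mul, one_mul, add_comm]

lemma four_pow_mul_coeff_partialSum_mem (N j : ℕ) :
    4 ^ j * (partialSum N).coeff j ∈ (⊥ : Subring ℚ) := by
  rw [coeff_partialSum, mul_sum]
  refine Subring.sum_mem _ fun k _ => ?_
  split_ifs with h
  · have h4 : (4 : ℚ) ^ j = 16 ^ k * 4 ^ (j - 2 * k) := by
      rw [show (16 : ℚ) = 4 ^ 2 by norm_num, ← pow_mul, ← pow_add, Nat.add_sub_cancel' h]
    refine Subring.mem_bot.mpr
      ⟨(-1) ^ k * k.centralBinom * 4 ^ (j - 2 * k) * (2 * k).choose (j - 2 * k), ?_⟩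
    rw [h4, invSqrtCoeff]
    push_cast
    field_simp
  · simp

lemma four_pow_mul_solution_succ_mem (n : ℕ) : 4 ^ n * solution (n + 1) ∈ (⊥ : Subring ℚ) := by
  rcases n with _ | j
  · simp [solution_one]
  · have h := Subring.add_mem _ (four_pow_mul_coeff_partialSum_mem (j + 3) (j + 1))
      (Subring.mul_mem _ (ofNat_mem _ 8) (four_pow_mul_coeff_partialSum_mem (j + 3) j))
    convert h using 1
    rw [solution_add_two]
    ring

end DyadicRecurrence

open DyadicRecurrence

/-- For the sequence `c_n` defined by the stated recurrence and initial data,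
`2^{2n-2}·c_n` is an integer for every `n ≥ 1`. -/
theorem stmt_10 (c : ℕ → ℚ) (h0 : c 0 = 0) (h1 : c 1 = 1) (h2 : c 2 = 2)
    (h3 : c 3 = -1/8) (h4 : c 4 = -1/2)
    (hrec : ∀ n : ℕ,
      4 * ((n : ℚ) + 4) * c (n + 5) + 8 * ((n : ℚ) + 2) * c (n + 4)
        + ((n : ℚ) + 3) * c (n + 3) + (4 * (n : ℚ) + 7) * c (n + 2)
        + (5 * (n : ℚ) + 4) * c (n + 1) + 2 * (n : ℚ) * c n = 0) :
    ∀ n : ℕ, 1 ≤ n → ∃ m : ℤ, (2 : ℚ) ^ (2 * n - 2) * c n = (m : ℚ) := by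
  have hc : c = solution := by
    refine eq_of_satisfiesRec hrec satisfiesRec_solution fun n hn => ?_
    interval_cases n
    · rw [h0, solution_zero]
    · rw [h1, solution_one]
    all_goals
      simp only [h2, h3, h4, solution_add_two, coeff_partialSum, sum_range_succ, sum_range_zero]
      norm_num [invSqrtCoeff, Nat.centralBinom, Nat.choose]
  intro n hn
  obtain ⟨j, rfl⟩ : ∃ j, n = j + 1 := ⟨n - 1, by omega⟩
  obtain ⟨m, hm⟩ := Subring.mem_bot.mp (four_pow_mul_solution_succ_mem j)
  refine ⟨m, ?_⟩
  rw [hm, hc, show 2 * (j + 1) - 2 = 2 * j by omega, pow_mul]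
  norm_num
end

section
/- For a prime p > 3 with p ∉ {5, 13}, the polynomial P(x) = x(2x+1)·Q(x)^{(p-1)/2} ∈ 𝔽_p[x], where Q(x) = 4+x²+2x³+x⁴, satisfies the differential equation (4+8x+x²+4x³+5x⁴+2x⁵)·x·P'(x) − (4+16x+x³+x⁴)·P(x) = 0 over 𝔽_p. -/
/-!
Since `2 * ((p - 1) / 2) = -1` in `𝔽_p`, the polynomial `P = x(2x+1) Q^m` behaves like
`x(2x+1) Q^{-1/2}`: multiplying by `Q` clears the only denominator in its logarithmic derivative,
and the equation reduces to a polynomial identity over `ℤ`. As `Q` is monic, the factor `Q` can be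
cancelled again.
-/

open Polynomial

theorem Polynomial.mul_derivative_mul_pow {R : Type*} [CommSemiring R] (f Q : R[X]) (m : ℕ) :
    Q * derivative (f * Q ^ m) = (Q * derivative f + m * f * derivative Q) * Q ^ m := by
  cases m with
  | zero => simp
  | succ m =>
    rw [derivative_mul, derivative_pow_succ]
    simp only [map_add, map_natCast, map_one]
    push_cast
    ring

theorem ZMod.two_mul_natCast_sub_one_div_two {n : ℕ} (hn : Odd n) :
    2 * (((n - 1) / 2 : ℕ) : ZMod n) = -1 := by
  obtain ⟨k, rfl⟩ := hn
  simp only [Nat.add_sub_cancel, Nat.mul_div_cancel_left k two_pos]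
  have hzero : ((2 * k + 1 : ℕ) : ZMod (2 * k + 1)) = 0 := ZMod.natCast_self _
  push_cast at hzero
  linear_combination hzero

theorem stmt_16_general (p : ℕ) (hp : p.Prime) (h3 : 3 < p) :
    (4 + 8 * X + X ^ 2 + 4 * X ^ 3 + 5 * X ^ 4 + 2 * X ^ 5 : Polynomial (ZMod p)) *
        (X * Polynomial.derivative
          (X * (2 * X + 1) * (4 + X ^ 2 + 2 * X ^ 3 + X ^ 4) ^ ((p - 1) / 2)))
      - (4 + 16 * X + X ^ 3 + X ^ 4) *
          (X * (2 * X + 1) * (4 + X ^ 2 + 2 * X ^ 3 + X ^ 4) ^ ((p - 1) / 2)) = 0 := by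
  set A : (ZMod p)[X] := 4 + 8 * X + X ^ 2 + 4 * X ^ 3 + 5 * X ^ 4 + 2 * X ^ 5
  set B : (ZMod p)[X] := 4 + 16 * X + X ^ 3 + X ^ 4
  set F : (ZMod p)[X] := X * (2 * X + 1)
  set Q : (ZMod p)[X] := 4 + X ^ 2 + 2 * X ^ 3 + X ^ 4
  set m := (p - 1) / 2
  have hm : 2 * (m : (ZMod p)[X]) = -1 := by
    simpa [map_ofNat, m] using
      congrArg C (ZMod.two_mul_natCast_sub_one_div_two (hp.odd_of_ne_two (by omega)))
  have hQ : Q.Monic := by unfold Q; monicity!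
  have hF' : derivative F = 4 * X + 1 := by
    simp [F, derivative_mul]; ring
  have hQ' : derivative Q = 2 * X + 6 * X ^ 2 + 4 * X ^ 3 := by
    simp [Q, derivative_pow, map_ofNat]; ring
  -- the equation for `F * Q ^ (-1/2)` with the denominator `2 * Q` cleared
  have hlogDeriv : X * A * F * derivative Q = 2 * Q * (X * A * derivative F - B * F) := by
    rw [hF', hQ']; simp only [A, B, F, Q]; ring
  rw [← hQ.mul_right_eq_zero_iff]
  linear_combination A * X * mul_derivative_mul_pow F Q m + m * Q ^ m * hlogDeriv
    + Q * (X * A * derivative F - B * F) * Q ^ m * hm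

/-- For a prime `p > 3`, `p ∉ {5, 13}`, the polynomial
`P(x) = x(2x+1)·Q(x)^{(p-1)/2} ∈ 𝔽_p[x]` with `Q(x) = 4+x²+2x³+x⁴` satisfies
`(4+8x+x²+4x³+5x⁴+2x⁵)·x·P'(x) − (4+16x+x³+x⁴)·P(x) = 0` over `𝔽_p`. -/
theorem stmt_16 (p : ℕ) (hp : p.Prime) (h3 : 3 < p) (h5 : p ≠ 5) (h13 : p ≠ 13) :
    (4 + 8 * X + X ^ 2 + 4 * X ^ 3 + 5 * X ^ 4 + 2 * X ^ 5 : Polynomial (ZMod p)) *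
        (X * Polynomial.derivative
          (X * (2 * X + 1) * (4 + X ^ 2 + 2 * X ^ 3 + X ^ 4) ^ ((p - 1) / 2)))
      - (4 + 16 * X + X ^ 3 + X ^ 4) *
          (X * (2 * X + 1) * (4 + X ^ 2 + 2 * X ^ 3 + X ^ 4) ^ ((p - 1) / 2)) = 0 :=
  stmt_16_general p hp h3
end

section
/- Let p be an odd prime, m = (p-1)/2, and let F(z) = ∑_{j=0}^m binom(m,j)·binom(m+1,j)·z^j ∈ 𝔽_p[z] be the (truncated) hypergeometric polynomial F(-m, -m-1; 1; z). Then F satisfies the differential equation z(1−z)F''(z) + (1+2mz)F'(z) − m(m+1)F(z) = 0 over 𝔽_p, and consequently F has no multiple root z₀ with z₀ ≠ 0 and z₀ ≠ 1 in any field extension of 𝔽_p. -/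
/-!
With `c n = (m.choose n) * ((m + 1).choose n)`, the coefficient of `X ^ n` in the differential
expression is `(n + 1) ^ 2 * c (n + 1) - (m - n) * (m + 1 - n) * c n`, which vanishes by
`(m.choose (n + 1)) * (n + 1) = (m.choose n) * (m - n)`.

For the roots, write `G = (X - z) ^ (n + 2) * H` with `n + 2 ≤ deg G < p`. The equation makes
`(X - z) ^ (n + 1)` divide `X * (1 - X) * G''`, hence `G''` because `z ∉ {0, 1}`. But `G''` is
`(n + 2) * (n + 1) * (X - z) ^ n * H` modulo `(X - z) ^ (n + 1)`, and `(n + 2) * (n + 1)` is a unit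
in characteristic `p`, so `X - z` divides `H`: the multiplicity of `z` cannot be exactly `n + 2`.
-/

open Polynomial

theorem Nat.cast_choose_succ_right_mul {R : Type*} [CommRing R] (m n : ℕ) :
    (m.choose (n + 1) : R) * (n + 1) = m.choose n * (m - n) := by
  rcases le_or_gt n m with h | h
  · have := congrArg (Nat.cast (R := R)) (Nat.choose_succ_right_eq m n)
    push_cast [Nat.cast_sub h] at this
    exact this
  · simp [Nat.choose_eq_zero_of_lt h, Nat.choose_eq_zero_of_lt (h.trans (Nat.lt_succ_self n))]

theorem Polynomial.coeff_X_mul_derivative {R : Type*} [CommSemiring R] (p : R[X]) (n : ℕ) :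
    (X * derivative p).coeff n = n * p.coeff n := by
  rcases n with _ | n
  · simp
  · rw [coeff_X_mul, coeff_derivative]; push_cast; ring

noncomputable def truncatedHypergeometric (R : Type*) [CommRing R] (m : ℕ) : R[X] :=
  ∑ j ∈ Finset.range (m + 1), C ((m.choose j : R) * ((m + 1).choose j : R)) * X ^ j

section truncatedHypergeometric

variable (R : Type*) [CommRing R] (m : ℕ)

theorem coeff_truncatedHypergeometric (n : ℕ) :
    (truncatedHypergeometric R m).coeff n = m.choose n * (m + 1).choose n := by
  simp only [truncatedHypergeometric, finsetSum_coeff, coeff_C_mul_X_pow]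
  rw [Finset.sum_ite_eq]
  split_ifs with h
  · rfl
  · rw [Finset.mem_range, not_lt] at h
    simp [Nat.choose_eq_zero_of_lt h]

theorem truncatedHypergeometric_coeff_succ_recurrence (n : ℕ) :
    (truncatedHypergeometric R m).coeff (n + 1) * (n + 1) ^ 2 =
      (truncatedHypergeometric R m).coeff n * ((m - n) * (m + 1 - n)) := by
  simp only [coeff_truncatedHypergeometric]
  have h₁ := Nat.cast_choose_succ_right_mul (R := R) m n
  have h₂ := Nat.cast_choose_succ_right_mul (R := R) (m + 1) n
  push_cast at h₂
  linear_combination (((m + 1).choose (n + 1) : R) * (n + 1)) * h₁ + (m.choose n * (m - n) : R) * h₂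

theorem truncatedHypergeometric_ode :
    X * (1 - X) * derivative (derivative (truncatedHypergeometric R m))
      + (1 + C (2 * (m : R)) * X) * derivative (truncatedHypergeometric R m)
      - C ((m : R) * ((m : R) + 1)) * truncatedHypergeometric R m = 0 := by
  set F := truncatedHypergeometric R m
  -- `X ^ 2 * F'' = θ (θ F) - θ F` for the Euler operator `θ = X * d/dX`, which acts on `X ^ n` as `n`
  have hθ : X * (1 - X) * derivative (derivative F) + (1 + C (2 * (m : R)) * X) * derivative F
      - C ((m : R) * ((m : R) + 1)) * F = X * derivative (derivative F) + derivative F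
        - X * derivative (X * derivative F) + C (2 * (m : R) + 1) * (X * derivative F)
        - C ((m : R) * ((m : R) + 1)) * F := by
    rw [derivative_mul, derivative_X, C_add, C_1]
    ring
  rw [hθ]
  ext n
  simp only [coeff_add, coeff_sub, coeff_C_mul, coeff_X_mul_derivative, coeff_derivative, coeff_zero]
  linear_combination truncatedHypergeometric_coeff_succ_recurrence R m n

theorem truncatedHypergeometric_ne_zero [Nontrivial R] : truncatedHypergeometric R m ≠ 0 := by
  intro h
  simpa [coeff_truncatedHypergeometric] using congrArg (coeff · 0) h

theorem natDegree_truncatedHypergeometric_le : (truncatedHypergeometric R m).natDegree ≤ m := by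
  rw [natDegree_le_iff_coeff_eq_zero]
  intro n hn
  simp [coeff_truncatedHypergeometric, Nat.choose_eq_zero_of_lt (show m < n by exact_mod_cast hn)]

theorem map_truncatedHypergeometric {S : Type*} [CommRing S] (f : R →+* S) :
    (truncatedHypergeometric R m).map f = truncatedHypergeometric S m := by
  ext n
  simp [coeff_truncatedHypergeometric]

end truncatedHypergeometric

theorem derivative_derivative_X_sub_C_pow_mul {R : Type*} [CommRing R] (z : R) (n : ℕ) (H : R[X]) :
    derivative (derivative ((X - C z) ^ (n + 2) * H)) =
      C (((n + 2) * (n + 1) : ℕ) : R) * (X - C z) ^ n * H + (X - C z) ^ (n + 1) *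
        (C (2 * (n + 2) : R) * derivative H + (X - C z) * derivative (derivative H)) := by
  simp only [derivative_mul, derivative_pow, derivative_sub, derivative_X, derivative_C,
    derivative_one, derivative_zero, derivative_natCast, map_natCast, map_mul, map_add, map_ofNat]
  push_cast
  ring

section SecondOrderODE

variable {K : Type*} [Field K]

theorem X_sub_C_dvd_of_pow_dvd_derivative_derivative {z : K} {n : ℕ} {H : K[X]}
    (hn : (((n + 2) * (n + 1) : ℕ) : K) ≠ 0)
    (h : (X - C z) ^ (n + 1) ∣ derivative (derivative ((X - C z) ^ (n + 2) * H))) :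
    X - C z ∣ H := by
  rw [derivative_derivative_X_sub_C_pow_mul, dvd_add_left (dvd_mul_right _ _)] at h
  have h' : (X - C z) ^ n * (X - C z) ∣ (X - C z) ^ n * (C (((n + 2) * (n + 1) : ℕ) : K) * H) := by
    rw [← pow_succ]
    convert h using 1
    ring
  rw [mul_dvd_mul_iff_left (pow_ne_zero n (X_sub_C_ne_zero z))] at h'
  exact (isUnit_C.mpr hn.isUnit).dvd_mul_left.mp h'

theorem rootMultiplicity_lt_two_of_ode (p : ℕ) [CharP K p] {P A B G : K[X]} {z : K}
    (hode : P * derivative (derivative G) + A * derivative G + B * G = 0)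
    (hPz : ¬ P.IsRoot z) (hG : G ≠ 0) (hdeg : G.natDegree < p) :
    G.rootMultiplicity z < 2 := by
  by_contra! hμ
  obtain ⟨n, hn⟩ : ∃ n, G.rootMultiplicity z = n + 2 := ⟨_, (Nat.sub_add_cancel hμ).symm⟩
  have hdvd : (X - C z) ^ (n + 2) ∣ G := by simpa [hn] using pow_rootMultiplicity_dvd G z
  obtain ⟨H, hH⟩ := id hdvd
  have hnp : n + 2 < p := by
    simpa [natDegree_X_sub_C] using (natDegree_le_of_dvd hdvd hG).trans_lt hdeg
  have hcast : (((n + 2) * (n + 1) : ℕ) : K) ≠ 0 := by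
    rw [Nat.cast_mul]
    refine mul_ne_zero ?_ ?_ <;> rw [Ne, CharP.cast_eq_zero_iff K p] <;>
      exact fun hpk => (Nat.le_of_dvd (by omega) hpk).not_gt (by omega)
  have hPG'' : (X - C z) ^ (n + 1) ∣ P * derivative (derivative G) := by
    rw [show P * derivative (derivative G) = -(A * derivative G + B * G) by linear_combination hode,
      dvd_neg]
    exact dvd_add ((pow_sub_one_dvd_derivative_of_pow_dvd hdvd).mul_left A)
      (((pow_dvd_pow _ (n + 1).le_succ).trans hdvd).mul_left B)
  have hcop : IsCoprime ((X - C z) ^ (n + 1)) P :=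
    ((irreducible_X_sub_C z).coprime_iff_not_dvd.mpr (mt dvd_iff_isRoot.mp hPz)).pow_left
  rw [hH] at hPG''
  obtain ⟨H', rfl⟩ := X_sub_C_dvd_of_pow_dvd_derivative_derivative hcast
    (hcop.dvd_of_dvd_mul_left hPG'')
  refine pow_rootMultiplicity_not_dvd hG z (Dvd.intro H' ?_)
  rw [hn, hH]
  ring

end SecondOrderODE

theorem stmt_17_general (p : ℕ) (hp : p.Prime) :
    let m := (p - 1) / 2
    let F : Polynomial (ZMod p) :=
      ∑ j ∈ Finset.range (m + 1),
        Polynomial.C ((m.choose j : ZMod p) * ((m + 1).choose j : ZMod p)) * X ^ j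
    (X * (1 - X) * Polynomial.derivative (Polynomial.derivative F)
        + (1 + Polynomial.C (2 * (m : ZMod p)) * X) * Polynomial.derivative F
        - Polynomial.C ((m : ZMod p) * ((m : ZMod p) + 1)) * F = 0) ∧
    ∀ (K : Type) [Field K] [Algebra (ZMod p) K] (z : K), z ≠ 0 → z ≠ 1 →
      ¬ ((X - Polynomial.C z) ^ 2 ∣ F.map (algebraMap (ZMod p) K)) := by
  intro m F
  refine ⟨truncatedHypergeometric_ode (ZMod p) m, fun K _ _ z hz0 hz1 hdvd => ?_⟩
  have : Fact p.Prime := ⟨hp⟩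
  have : CharP K p := charP_of_injective_algebraMap (algebraMap (ZMod p) K).injective p
  have hF : F.map (algebraMap (ZMod p) K) = truncatedHypergeometric K m :=
    map_truncatedHypergeometric (ZMod p) m _
  rw [hF] at hdvd
  have hode := truncatedHypergeometric_ode K m
  rw [sub_eq_add_neg, ← neg_mul] at hode
  have hPz : ¬ (X * (1 - X) : K[X]).IsRoot z := by
    simp [sub_eq_zero, hz0, Ne.symm hz1]
  have hdeg : (truncatedHypergeometric K m).natDegree < p :=
    (natDegree_truncatedHypergeometric_le K m).trans_lt (by have := hp.two_le; omega)
  have hne := truncatedHypergeometric_ne_zero K m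
  exact (rootMultiplicity_lt_two_of_ode p hode hPz hne hdeg).not_ge
    ((le_rootMultiplicity_iff hne).mpr hdvd)

/-- For `p` an odd prime and `m = (p-1)/2`, the truncated hypergeometric polynomial
`F(z) = ∑_{j=0}^m binom(m,j)·binom(m+1,j)·z^j ∈ 𝔽_p[z]` satisfies the differential equation
`z(1−z)F'' + (1+2mz)F' − m(m+1)F = 0`, and consequently `F` has no multiple root
`z₀ ∉ {0, 1}` in any field extension of `𝔽_p`. -/
theorem stmt_17 (p : ℕ) (hp : p.Prime) (hodd : p ≠ 2) :
    let m := (p - 1) / 2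
    let F : Polynomial (ZMod p) :=
      ∑ j ∈ Finset.range (m + 1),
        Polynomial.C ((m.choose j : ZMod p) * ((m + 1).choose j : ZMod p)) * X ^ j
    (X * (1 - X) * Polynomial.derivative (Polynomial.derivative F)
        + (1 + Polynomial.C (2 * (m : ZMod p)) * X) * Polynomial.derivative F
        - Polynomial.C ((m : ZMod p) * ((m : ZMod p) + 1)) * F = 0) ∧
    ∀ (K : Type) [Field K] [Algebra (ZMod p) K] (z : K), z ≠ 0 → z ≠ 1 →
      ¬ ((X - Polynomial.C z) ^ 2 ∣ F.map (algebraMap (ZMod p) K)) :=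
  stmt_17_general p hp
end

section
/- Let p > 2 be prime, let g ∈ 𝔽_p(x) be a rational function, and suppose there exists a Laurent series φ ∈ 𝔽_p((x)) with formal derivative φ' = g, where g is viewed via its Laurent expansion at 0 under the embedding 𝔽_p(x) ⊂ 𝔽_p((x)). Then there exists a rational function f ∈ 𝔽_p(x) with f' = g. -/
open Polynomial HahnSeries
open scoped RatFunc

namespace HondaKatz

variable {p : ℕ} [Fact p.Prime]

/-- Formal derivative of a Laurent series over `ZMod p`. -/
noncomputable def D : LaurentSeries (ZMod p) →+ LaurentSeries (ZMod p) where
  toFun ψ :=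
    { coeff := fun n => ((n + 1 : ℤ) : ZMod p) * ψ.coeff (n + 1)
      isPWO_support' := by
        refine Set.IsPWO.mono (ψ.isPWO_support.image_of_monotone
          (f := fun m => m - 1) (fun a b hab => by simpa using hab)) ?_
        intro n hn
        have hψ : ψ.coeff (n + 1) ≠ 0 := by
          intro h0
          simp [Function.mem_support, h0] at hn
        exact ⟨n + 1, hψ, by ring⟩ }
  map_zero' := by
    ext n
    simp
  map_add' φ ψ := by
    ext n
    simp [mul_add]

@[simp] lemma D_coeff (ψ : LaurentSeries (ZMod p)) (n : ℤ) :
    (D ψ).coeff n = ((n + 1 : ℤ) : ZMod p) * ψ.coeff (n + 1) := rfl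

lemma single_mul_coeff (a m : ℤ) (c : ZMod p) (ψ : LaurentSeries (ZMod p)) :
    (single a c * ψ).coeff m = c * ψ.coeff (m - a) := by
  have := HahnSeries.coeff_single_mul_add (r := c) (x := ψ) (b := a) (a := m - a)
  rwa [sub_add_cancel] at this

lemma D_eq_zero (ψ : LaurentSeries (ZMod p))
    (hψ : ∀ m : ℤ, ψ.coeff m ≠ 0 → (p : ℤ) ∣ m) : D ψ = 0 := by
  ext n
  by_cases h : ψ.coeff (n + 1) = 0
  · simp [h]
  · have : ((n + 1 : ℤ) : ZMod p) = 0 :=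
      (ZMod.intCast_zmod_eq_zero_iff_dvd _ _).mpr (by exact_mod_cast hψ _ h)
    simp [this]

lemma D_mul_torsion (ψ β : LaurentSeries (ZMod p))
    (hβ : ∀ m : ℤ, ((m : ℤ) : ZMod p) * β.coeff m = 0) :
    D (ψ * β) = D ψ * β := by
  ext n
  have hs : (Set.IsPWO ((fun m => m - 1) '' ψ.support)) :=
    ψ.isPWO_support.image_of_monotone (fun a b hab => by simpa using hab)
  have hsub : (D ψ).support ⊆ (fun m => m - 1) '' ψ.support := by
    intro m hm
    have hψ : ψ.coeff (m + 1) ≠ 0 := by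
      intro h0
      simp [HahnSeries.mem_support, D_coeff, h0] at hm
    exact ⟨m + 1, hψ, by ring⟩
  rw [HahnSeries.coeff_mul_left' hs hsub, D_coeff, HahnSeries.coeff_mul, Finset.mul_sum]
  refine Finset.sum_bij' (i := fun x _ => ((x.1 - 1 : ℤ), x.2))
    (j := fun x _ => ((x.1 + 1 : ℤ), x.2)) ?_ ?_ ?_ ?_ ?_
  · rintro ⟨i, j⟩ hij
    rw [Finset.mem_addAntidiagonal] at hij ⊢
    obtain ⟨hi, hj, hijn⟩ := hij
    exact ⟨⟨i, hi, rfl⟩, hj, by simp only at hijn ⊢; omega⟩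
  · rintro ⟨i, j⟩ hij
    rw [Finset.mem_addAntidiagonal] at hij ⊢
    obtain ⟨⟨m, hm, hmi⟩, hj, hijn⟩ := hij
    simp only at hmi hijn ⊢
    have : i + 1 = m := by omega
    exact ⟨by rwa [this], hj, by omega⟩
  · rintro ⟨i, j⟩ _; simp
  · rintro ⟨i, j⟩ _; simp
  · rintro ⟨i, j⟩ hij
    rw [Finset.mem_addAntidiagonal] at hij
    obtain ⟨hi, hj, hijn⟩ := hij
    simp only at hijn
    have h1 : ((n + 1 : ℤ) : ZMod p) = ((i : ℤ) : ZMod p) + ((j : ℤ) : ZMod p) := by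
      rw [← Int.cast_add]; congr 1; omega
    have h2 : (i - 1 + 1 : ℤ) = i := by ring
    rw [D_coeff, h2, h1, add_mul, mul_comm ((j : ℤ) : ZMod p), mul_assoc _ _ (((j : ℤ) : ZMod p)),
      mul_comm (β.coeff j), hβ, mul_zero, add_zero, mul_assoc]

lemma D_single_mul (a : ℤ) (c : ZMod p) (ψ : LaurentSeries (ZMod p)) :
    D (single a c * ψ) = single (a - 1) (((a : ℤ) : ZMod p) * c) * ψ + single a c * D ψ := by
  ext n
  rw [D_coeff, single_mul_coeff, HahnSeries.coeff_add, single_mul_coeff, single_mul_coeff,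
    D_coeff]
  have : (n - (a - 1) : ℤ) = (n - a) + 1 := by ring
  rw [this]
  have h1 : ((n + 1 : ℤ) : ZMod p) = ((a : ℤ) : ZMod p) + (((n - a) + 1 : ℤ) : ZMod p) := by
    rw [← Int.cast_add]; congr 1; ring
  rw [h1]
  push_cast
  ring_nf

end HondaKatz

namespace HondaKatz

section Poly

variable {p : ℕ} [Fact p.Prime] (A : Polynomial (ZMod p))

/-- `i`-th piece of the `p`-adic digit decomposition of a polynomial. -/
noncomputable def piece (i : ℕ) : Polynomial (ZMod p) :=
  ∑ k ∈ Finset.range (A.natDegree + 1), C (A.coeff (p * k + i)) * X ^ k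

lemma coeff_piece (i k : ℕ) :
    (piece A i).coeff k = if k ≤ A.natDegree then A.coeff (p * k + i) else 0 := by
  rw [piece, finset_sum_coeff]
  simp only [coeff_C_mul, coeff_X_pow, mul_ite, mul_one, mul_zero]
  rw [Finset.sum_ite_eq (Finset.range (A.natDegree + 1)) k (fun j => A.coeff (p * j + i))]
  simp [Nat.lt_succ_iff]

lemma pow_p_eq_expand (f : Polynomial (ZMod p)) : f ^ p = expand (ZMod p) p f := by
  have h := Polynomial.map_frobenius_expand p f
  rw [ZMod.frobenius_zmod, Polynomial.map_id] at h
  exact h.symm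

lemma decomp : A = ∑ i ∈ Finset.range p, piece A i ^ p * X ^ i := by
  have hp0 : 0 < p := (Fact.out : p.Prime).pos
  ext n
  rw [finset_sum_coeff]
  have key : ∀ i ∈ Finset.range p,
      (piece A i ^ p * X ^ i).coeff n = if i = n % p then A.coeff n else 0 := by
    intro i hi
    rw [Finset.mem_range] at hi
    rw [pow_p_eq_expand, coeff_mul_X_pow', coeff_expand hp0]
    by_cases hin : i = n % p
    · subst hin
      rw [if_pos rfl]
      have h1 : n % p ≤ n := Nat.mod_le n p
      have e : n - n % p = p * (n / p) := Nat.sub_eq_of_eq_add (Nat.div_add_mod n p).symm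
      have h2 : p ∣ n - n % p := by rw [e]; exact dvd_mul_right p _
      have h3 : (n - n % p) / p = n / p := by rw [e, Nat.mul_div_cancel_left _ hp0]
      rw [if_pos h1, if_pos h2, coeff_piece, h3]
      by_cases h4 : n / p ≤ A.natDegree
      · rw [if_pos h4, Nat.div_add_mod]
      · rw [if_neg h4]
        rw [eq_comm]
        apply coeff_eq_zero_of_natDegree_lt
        calc A.natDegree < A.natDegree + 1 := by omega
          _ ≤ n / p := by omega
          _ ≤ n := Nat.div_le_self n p
    · rw [if_neg hin]
      by_cases h1 : i ≤ n
      · rw [if_pos h1]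
        by_cases h2 : p ∣ n - i
        · exfalso
          apply hin
          have hmod : i % p = n % p := (Nat.modEq_iff_dvd' h1).mpr h2
          rw [← hmod, Nat.mod_eq_of_lt hi]
        · rw [if_neg h2]
      · rw [if_neg h1]
  rw [Finset.sum_congr rfl key, Finset.sum_ite_eq' (Finset.range p) (n % p) (fun _ => A.coeff n)]
  rw [if_pos (Finset.mem_range.mpr (Nat.mod_lt n hp0))]

end Poly

end HondaKatz

namespace HondaKatz

section Main

variable {p : ℕ} [Fact p.Prime]

/-- The canonical map from polynomials to Laurent series, through `RatFunc`. -/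
noncomputable def π : Polynomial (ZMod p) →+* LaurentSeries (ZMod p) :=
  (algebraMap (RatFunc (ZMod p)) (LaurentSeries (ZMod p))).comp
    (algebraMap (Polynomial (ZMod p)) (RatFunc (ZMod p)))

lemma π_apply (q : Polynomial (ZMod p)) :
    π q = ((q : PowerSeries (ZMod p)) : LaurentSeries (ZMod p)) := by
  rw [RatFunc.coe_coe]
  rfl

lemma π_coeff (q : Polynomial (ZMod p)) (m : ℤ) :
    (π q).coeff m = if m < 0 then 0 else q.coeff m.natAbs := by
  rw [π_apply, PowerSeries.coeff_coe]
  simp [Polynomial.coeff_coe]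

lemma π_injective : Function.Injective (π (p := p)) :=
  (RingHom.injective (algebraMap (RatFunc (ZMod p)) (LaurentSeries (ZMod p)))).comp
    (RatFunc.algebraMap_injective (ZMod p))

lemma dvd_of_π_pow_coeff_ne_zero (q : Polynomial (ZMod p)) (m : ℤ)
    (hm : (π (q ^ p)).coeff m ≠ 0) : (p : ℤ) ∣ m := by
  have hp0 : 0 < p := (Fact.out : p.Prime).pos
  rw [π_coeff] at hm
  by_cases hneg : m < 0
  · simp [hneg] at hm
  rw [if_neg hneg] at hm
  rw [pow_p_eq_expand, coeff_expand hp0] at hm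
  by_cases hdvd : p ∣ m.natAbs
  · obtain ⟨k, hk⟩ := hdvd
    refine ⟨(k : ℤ), ?_⟩
    omega
  · simp [hdvd] at hm

lemma π_pow_torsion (q : Polynomial (ZMod p)) (m : ℤ) :
    ((m : ℤ) : ZMod p) * (π (q ^ p)).coeff m = 0 := by
  by_cases hm : (π (q ^ p)).coeff m = 0
  · rw [hm, mul_zero]
  · have := dvd_of_π_pow_coeff_ne_zero q m hm
    rw [(ZMod.intCast_zmod_eq_zero_iff_dvd m p).mpr this, zero_mul]

lemma D_π_pow (q : Polynomial (ZMod p)) : D (π (q ^ p)) = 0 :=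
  D_eq_zero _ (dvd_of_π_pow_coeff_ne_zero q)

end Main

end HondaKatz

open HondaKatz in
/-- Honda–Katz descent: let `p > 2` be prime and `g ∈ 𝔽_p(x)`. If there is a formal Laurent
series `φ ∈ 𝔽_p((x))` with `φ' = g` (derivatives expressed coefficientwise through the
embedding of `𝔽_p(x)` into `𝔽_p((x))` by expansion at `x = 0`), then there is a rational
function `f ∈ 𝔽_p(x)` with `f' = g`. -/
theorem stmt_19 (p : ℕ) [Fact p.Prime] (hp : 2 < p) (g : RatFunc (ZMod p))
    (h : ∃ φ : LaurentSeries (ZMod p), ∀ n : ℤ,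
      ((n + 1 : ℤ) : ZMod p) * φ.coeff (n + 1) = (g : LaurentSeries (ZMod p)).coeff n) :
    ∃ f : RatFunc (ZMod p), ∀ n : ℤ,
      ((n + 1 : ℤ) : ZMod p) * (f : LaurentSeries (ZMod p)).coeff (n + 1)
        = (g : LaurentSeries (ZMod p)).coeff n := by
  classical
  obtain ⟨φ, hφ⟩ := h
  have hp0 : 0 < p := by omega
  have hp1 : p - 1 + 1 = p := Nat.succ_pred_eq_of_pos hp0
  set α := algebraMap (RatFunc (ZMod p)) (LaurentSeries (ZMod p)) with hα_def
  set b : Polynomial (ZMod p) := g.denom with hb_def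
  have hb : b ≠ 0 := g.denom_ne_zero
  set A : Polynomial (ZMod p) := g.num * b ^ (p - 1) with hA_def
  set β : LaurentSeries (ZMod p) := π (b ^ p) with hβ_def
  have hbK : algebraMap (Polynomial (ZMod p)) (RatFunc (ZMod p)) b ≠ 0 :=
    RatFunc.algebraMap_ne_zero hb
  have hbb : b ^ (p - 1) * b = b ^ p := by
    rw [← pow_succ, hp1]
  -- `g` as a quotient with denominator `b ^ p`
  have hK : g * algebraMap _ (RatFunc (ZMod p)) (b ^ p) = algebraMap _ _ A := by
    rw [← RatFunc.num_div_denom g, ← hb_def, div_mul_eq_mul_div, div_eq_iff hbK,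
      ← map_mul, ← map_mul]
    exact congrArg _ (by rw [hA_def, mul_assoc, hbb])
  have hgβ : α g * β = π A := by
    have := congrArg α hK
    rw [map_mul] at this
    exact this
  -- the pieces and the candidate antiderivative
  set Q : ℕ → Polynomial (ZMod p) := piece A with hQ_def
  set U : Polynomial (ZMod p) := ∑ i ∈ Finset.range (p - 1),
    Polynomial.C (((i + 1 : ℕ) : ZMod p))⁻¹ * (Q i ^ p * X ^ (i + 1)) with hU_def
  set f : RatFunc (ZMod p) :=
    algebraMap _ _ U / algebraMap _ _ (b ^ p) with hf_def
  have hβne : β ≠ 0 := fun h0 => RatFunc.algebraMap_ne_zero (pow_ne_zero p hb)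
    ((RingHom.injective α) (by rw [map_zero]; exact h0))
  have hfβ : α f * β = π U := by
    rw [hf_def, map_div₀]
    have : α (algebraMap _ _ U) = π U := rfl
    rw [this]
    have : α (algebraMap _ _ (b ^ p)) = β := rfl
    rw [this, div_mul_cancel₀ _ hβne]
  have hβtor : ∀ m : ℤ, ((m : ℤ) : ZMod p) * β.coeff m = 0 := π_pow_torsion b
  -- computing D (π U)
  have hsingle : ∀ i : ℕ, ∀ c : ZMod p, π (Polynomial.C c * (Q i ^ p * X ^ (i + 1)))
      = single ((i + 1 : ℕ) : ℤ) c * π (Q i ^ p) := by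
    intro i c
    have hC : π (Polynomial.C c) = single (0 : ℤ) c := by
      rw [π_apply, Polynomial.coe_C, PowerSeries.coe_C, HahnSeries.C_apply]
    have hX : π (X ^ (i + 1) : Polynomial (ZMod p)) = single ((i + 1 : ℕ) : ℤ) 1 := by
      rw [π_apply]
      push_cast
      rw [HahnSeries.ofPowerSeries_X, ← RatFunc.single_one_eq_pow]
      congr 1
    rw [map_mul, map_mul, hC, hX, ← mul_assoc, mul_comm _ (single ((i + 1 : ℕ) : ℤ) 1),
      ← mul_assoc, HahnSeries.single_mul_single, add_zero, one_mul]
  have hDU : D (π U) = ∑ i ∈ Finset.range (p - 1), single (i : ℤ) 1 * π (Q i ^ p) := by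
    rw [hU_def, map_sum, map_sum]
    refine Finset.sum_congr rfl fun i hi => ?_
    rw [Finset.mem_range] at hi
    rw [hsingle i _, D_single_mul, D_π_pow, mul_zero, add_zero]
    have hcast : ((((i + 1 : ℕ) : ℤ)) : ZMod p) = ((i + 1 : ℕ) : ZMod p) := by push_cast; ring
    have hne : ((i + 1 : ℕ) : ZMod p) ≠ 0 := by
      rw [Ne, ZMod.natCast_eq_zero_iff]
      intro hdvd
      have := Nat.le_of_dvd (Nat.succ_pos i) hdvd
      omega
    rw [hcast, mul_inv_cancel₀ hne]
    norm_num
  -- decomposition of π A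
  have hπA : π A = ∑ i ∈ Finset.range p, single (i : ℤ) 1 * π (Q i ^ p) := by
    conv_lhs => rw [decomp A]
    rw [map_sum]
    refine Finset.sum_congr rfl fun i _ => ?_
    rw [map_mul, mul_comm]
    congr 1
    rw [π_apply]
    push_cast
    rw [HahnSeries.ofPowerSeries_X, ← RatFunc.single_one_eq_pow]
  -- the exceptional term
  set w : LaurentSeries (ZMod p) := π (Q (p - 1)) / π b with hw_def
  have hπb : π b ≠ 0 := fun h0 => hb (π_injective (by rw [h0, map_zero]))
  have hwβ : w ^ p * β = π (Q (p - 1) ^ p) := by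
    rw [hw_def, div_pow, hβ_def, map_pow, map_pow,
      div_mul_cancel₀ _ (pow_ne_zero p hπb)]
  have hsplit : (∑ i ∈ Finset.range p, single (i : ℤ) 1 * π (Q i ^ p))
      = (∑ i ∈ Finset.range (p - 1), single (i : ℤ) 1 * π (Q i ^ p))
        + single (((p - 1 : ℕ)) : ℤ) 1 * π (Q (p - 1) ^ p) := by
    have hss := Finset.sum_range_succ (fun i => single (i : ℤ) 1 * π (Q i ^ p)) (p - 1)
    rw [hp1] at hss
    exact hss
  have hE : α g - D (α f) = single (((p - 1 : ℕ)) : ℤ) 1 * w ^ p := by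
    have hmul : (α g - D (α f)) * β = (single (((p - 1 : ℕ)) : ℤ) 1 * w ^ p) * β := by
      rw [sub_mul, hgβ, ← D_mul_torsion _ _ hβtor, hfβ, hDU, hπA, hsplit, mul_assoc, hwβ]
      ring
    exact mul_right_cancel₀ hβne hmul
  have hw0 : w = 0 := by
    by_contra hw
    have hξ : single (((p - 1 : ℕ)) : ℤ) (1 : ZMod p) * w ^ p ≠ 0 :=
      mul_ne_zero (HahnSeries.single_ne_zero one_ne_zero) (pow_ne_zero _ hw)
    set N := (single (((p - 1 : ℕ)) : ℤ) (1 : ZMod p) * w ^ p).order with hN_def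
    have hN : N = ((p - 1 : ℕ) : ℤ) + p * w.order := by
      rw [hN_def, HahnSeries.order_mul (HahnSeries.single_ne_zero one_ne_zero)
        (pow_ne_zero _ hw), HahnSeries.order_single one_ne_zero, HahnSeries.order_pow,
        nsmul_eq_mul]
    have hNp : ((N + 1 : ℤ) : ZMod p) = 0 := by
      have h1p : 1 ≤ p := hp0
      rw [hN]
      push_cast [h1p]
      simp [ZMod.natCast_self]
    have hcoeff := mt HahnSeries.coeff_order_eq_zero.mp hξ
    apply hcoeff
    have h1 : (single (((p - 1 : ℕ)) : ℤ) (1 : ZMod p) * w ^ p).coeff N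
        = (α g).coeff N - (D (α f)).coeff N := by
      rw [← hE, HahnSeries.coeff_sub]
    rw [h1, D_coeff, hNp, zero_mul, sub_zero, ← hφ N, hNp, zero_mul]
  have h' := hE
  rw [hw0, zero_pow (by omega : p ≠ 0), mul_zero, sub_eq_zero] at h'
  exact ⟨f, fun n => by rw [h', D_coeff]⟩
end
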